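/- arXiv:2512.08835 — 3 statements merged into one kernel-verified Lean document; each statement's English description precedes it below -/
import Mathlib

section
/- Let S be an inverse semigroup and (X,E(S),p) a presheaf over the semilattice E(S). Then the following are equivalent: (1) there exists an idempotent-separating homomorphism φ : S → T_X whose image is a wide inverse subsemigroup of T_X (i.e. contains all idempotents of T_X); (2) there exists a supported action (X,S,p̄) of S on X such that the presheaf over E(S) obtained by restricting this action to the idempotents is isomorphic to (X,E(S),p). -/
/-- An inverse semigroup: every element `a` has a unique inverse `a⁻¹` with
`a * a⁻¹ * a = a` and `a⁻¹ * a * a⁻¹ = a⁻¹`. -/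
class InvSemigroup (S : Type*) extends Semigroup S, Inv S where
  mul_inv_mul : ∀ a : S, a * a⁻¹ * a = a
  inv_mul_inv : ∀ a : S, a⁻¹ * a * a⁻¹ = a⁻¹
  inv_unique : ∀ a b : S, a * b * a = a → b * a * b = b → b = a⁻¹

namespace InvSemigroup

variable {S : Type*} [InvSemigroup S]

theorem inv_eq {a b : S} (h1 : a * b * a = a) (h2 : b * a * b = b) : b = a⁻¹ :=
  inv_unique a b h1 h2

theorem inv_inv (a : S) : a⁻¹⁻¹ = a :=
  (inv_eq (inv_mul_inv a) (mul_inv_mul a)).symm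

theorem idem_inv {e : S} (he : e * e = e) : e⁻¹ = e := by
  have h : e = e⁻¹ := inv_eq (a := e) (b := e) (by rw [he, he]) (by rw [he, he])
  exact h.symm

theorem mul_mul {a : S} (ha : a * a = a) (y : S) : a * (a * y) = a * y := by
  rw [← mul_assoc, ha]

theorem fse_eq {e f : S} (he : e * e = e) (hf : f * f = f) :
    f * (e * f)⁻¹ * e = (e * f)⁻¹ := by
  have hs := mul_inv_mul (e * f)
  have hs2 := inv_mul_inv (e * f)
  simp only [mul_assoc] at hs hs2
  have h3 := congrArg (· * e) hs2
  simp only [mul_assoc] at h3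
  apply inv_eq
  · simp only [mul_assoc]
    rw [mul_mul he, mul_mul hf]
    exact hs
  · simp only [mul_assoc]
    rw [mul_mul he, mul_mul hf]
    rw [h3]

theorem s_idem {e f : S} (he : e * e = e) (hf : f * f = f) :
    (e * f)⁻¹ * (e * f)⁻¹ = (e * f)⁻¹ := by
  have hs2 := inv_mul_inv (e * f)
  simp only [mul_assoc] at hs2
  have h3 := congrArg (· * e) hs2
  simp only [mul_assoc] at h3
  have h4 := fse_eq he hf
  simp only [mul_assoc] at h4
  rw [← h4]
  simp only [mul_assoc]
  rw [h3]

theorem idem_mul {e f : S} (he : e * e = e) (hf : f * f = f) :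
    (e * f) * (e * f) = e * f := by
  have hs := s_idem he hf
  have hinv : (e * f)⁻¹ = e * f := by
    have h1 := idem_inv hs
    rw [inv_inv] at h1
    exact h1.symm
  rw [hinv] at hs
  exact hs

theorem idem_comm {e f : S} (he : e * e = e) (hf : f * f = f) : e * f = f * e := by
  have hef := idem_mul he hf
  have hfe := idem_mul hf he
  have h1 : f * e = (e * f)⁻¹ := by
    apply inv_eq
    · simp only [mul_assoc]
      rw [mul_mul hf, mul_mul he]
      have h5 := hef
      simp only [mul_assoc] at h5
      exact h5
    · simp only [mul_assoc]
      rw [mul_mul he, mul_mul hf]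
      have h5 := hfe
      simp only [mul_assoc] at h5
      exact h5
  have h2 : (e * f)⁻¹ = e * f := idem_inv hef
  rw [h1, h2]

theorem d_idem (s : S) : (s⁻¹ * s) * (s⁻¹ * s) = s⁻¹ * s := by
  have h := inv_mul_inv s
  calc (s⁻¹ * s) * (s⁻¹ * s) = (s⁻¹ * s * s⁻¹) * s := by simp only [mul_assoc]
    _ = s⁻¹ * s := by rw [h]

theorem r_idem (s : S) : (s * s⁻¹) * (s * s⁻¹) = s * s⁻¹ := by
  have h := mul_inv_mul s
  calc (s * s⁻¹) * (s * s⁻¹) = (s * s⁻¹ * s) * s⁻¹ := by simp only [mul_assoc]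
    _ = s * s⁻¹ := by rw [h]

theorem mul_inv_rev (a b : S) : (a * b)⁻¹ = b⁻¹ * a⁻¹ := by
  have hcomm : (b * b⁻¹) * (a⁻¹ * a) = (a⁻¹ * a) * (b * b⁻¹) :=
    idem_comm (r_idem b) (d_idem a)
  symm
  apply inv_eq
  · calc a * b * (b⁻¹ * a⁻¹) * (a * b)
        = a * ((b * b⁻¹) * (a⁻¹ * a)) * b := by simp only [mul_assoc]
      _ = a * ((a⁻¹ * a) * (b * b⁻¹)) * b := by rw [hcomm]
      _ = (a * a⁻¹ * a) * (b * b⁻¹ * b) := by simp only [mul_assoc]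
      _ = a * b := by rw [mul_inv_mul, mul_inv_mul]
  · calc b⁻¹ * a⁻¹ * (a * b) * (b⁻¹ * a⁻¹)
        = b⁻¹ * ((a⁻¹ * a) * (b * b⁻¹)) * a⁻¹ := by simp only [mul_assoc]
      _ = b⁻¹ * ((b * b⁻¹) * (a⁻¹ * a)) * a⁻¹ := by rw [hcomm]
      _ = (b⁻¹ * b * b⁻¹) * (a⁻¹ * a * a⁻¹) := by simp only [mul_assoc]
      _ = b⁻¹ * a⁻¹ := by rw [inv_mul_inv, inv_mul_inv]

end InvSemigroup

/-- A supported (right) action `(X, S, p)` of an inverse semigroup `S` on a set `X`: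
the support map `p` takes values in the idempotents of `S` and satisfies (SA1)-(SA3). -/
structure SupportedAction (X : Type*) (S : Type*) [InvSemigroup S] where
  act : X → S → X
  p : X → S
  p_idem : ∀ x, p x * p x = p x
  act_act : ∀ x s t, act (act x s) t = act x (s * t)
  act_p : ∀ x, act x (p x) = x
  p_act : ∀ x s, p (act x s) = s⁻¹ * p x * s

namespace SupportedAction
variable {X S : Type*} [InvSemigroup S]

/-- The natural partial order on a supported action: `x ≤ y` iff `x = y · p(x)`. -/
def xle (A : SupportedAction X S) (x y : X) : Prop := x = A.act y (A.p x)

/-- The characteristic congruence of a supported action: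
`(s, t) ∈ ρ_X` iff `x · s = x · t` for all `x ∈ X`. -/
def rho (A : SupportedAction X S) (s t : S) : Prop := ∀ x, A.act x s = A.act x t

end SupportedAction

/-- A meet-semilattice: a commutative semigroup all of whose elements are idempotent. -/
class MeetSL (E : Type*) extends CommSemigroup E where
  idem : ∀ e : E, e * e = e

/-- The natural partial order on a meet-semilattice: `e ≤ f` iff `e = ef`. -/
def sle {E : Type*} [MeetSL E] (e f : E) : Prop := e = e * f

/-- The principal order-ideal `e↓ = {h ∈ E : h ≤ e}` of a meet-semilattice. -/
abbrev dOn (E : Type*) [MeetSL E] (e : E) : Type _ := {h : E // sle h e}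

/-- A presheaf of sets over a meet-semilattice `E`, viewed as a supported action
`(X, E, p)` of `E` on `X`. -/
structure SPresheaf (X : Type*) (E : Type*) [MeetSL E] where
  act : X → E → X
  p : X → E
  act_act : ∀ x e f, act (act x e) f = act x (e * f)
  act_p : ∀ x, act x (p x) = x
  p_act : ∀ x e, p (act x e) = p x * e

namespace SPresheaf
variable {X E : Type*} [MeetSL E]

/-- The natural partial order on a presheaf: `x ≤ y` iff `x = y · p(x)`. -/
def xle (P : SPresheaf X E) (x y : X) : Prop := x = P.act y (P.p x)

/-- The underlying set `X · e = {x ∈ X : p(x) ≤ e}` of the principal subpresheaf at `e`. -/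
abbrev sub (P : SPresheaf X E) (e : E) : Type _ := {x : X // sle (P.p x) e}

end SPresheaf

/-- An element of the generalised Munn semigroup `T_X` of the presheaf `P`: an isomorphism
`(α, θ)` between the principal subpresheaves `(X·e, e↓)` and `(X·f, f↓)`, i.e. a pair of
order-isomorphisms with `p(α(x)) = θ(p(x))` for all `x ∈ X·e`. -/
structure MunnElt {X E : Type*} [MeetSL E] (P : SPresheaf X E) where
  e : E
  f : E
  α : P.sub e ≃ P.sub f
  θ : dOn E e ≃ dOn E f
  α_ord : ∀ x y : P.sub e, P.xle x.1 y.1 ↔ P.xle (α x).1 (α y).1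
  θ_ord : ∀ a b : dOn E e, sle a.1 b.1 ↔ sle (θ a).1 (θ b).1
  compat : ∀ x : P.sub e, P.p (α x).1 = (θ ⟨P.p x.1, x.2⟩).1

namespace MunnElt
variable {X E : Type*} [MeetSL E] {P : SPresheaf X E}

/-- The partial-bijection graph of the first component of a Munn element. -/
def maps (t : MunnElt P) (x y : X) : Prop :=
  ∃ h : sle (P.p x) t.e, (t.α ⟨x, h⟩).1 = y

/-- The partial-bijection graph of the second component of a Munn element. -/
def mapsE (t : MunnElt P) (a b : E) : Prop :=
  ∃ h : sle a t.e, (t.θ ⟨a, h⟩).1 = b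

end MunnElt

/-- `mul` is the multiplication of the generalised Munn semigroup `T_X`: the product
`mul a b` is obtained by restricting `a` and `b` to the intersection of the relevant
principal subpresheaves and composing (apply `b` first, then `a`). -/
def IsMunnMul {X E : Type*} [MeetSL E] {P : SPresheaf X E}
    (mul : MunnElt P → MunnElt P → MunnElt P) : Prop :=
  ∀ a b : MunnElt P,
    (∀ x z : X, (mul a b).maps x z ↔ ∃ y, b.maps x y ∧ a.maps y z) ∧
    (∀ h k : E, (mul a b).mapsE h k ↔ ∃ m, b.mapsE h m ∧ a.mapsE m k)

/-- `inv` sends each `(α, θ)` of the generalised Munn semigroup to `(α⁻¹, θ⁻¹)`. -/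
def IsMunnInv {X E : Type*} [MeetSL E] {P : SPresheaf X E}
    (inv : MunnElt P → MunnElt P) : Prop :=
  ∀ t : MunnElt P,
    (∀ x y : X, (inv t).maps x y ↔ t.maps y x) ∧
    (∀ a b : E, (inv t).mapsE a b ↔ t.mapsE b a)

/-- The set of idempotents `E(S)` of an inverse semigroup. -/
abbrev ES (S : Type*) [InvSemigroup S] : Type _ := {e : S // e * e = e}

open InvSemigroup in
instance instMeetSLES (S : Type*) [InvSemigroup S] : MeetSL (ES S) where
  mul a b := ⟨a.1 * b.1, idem_mul a.2 b.2⟩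
  mul_assoc a b c := Subtype.ext (mul_assoc a.1 b.1 c.1)
  mul_comm a b := Subtype.ext (idem_comm a.2 b.2)
  idem a := Subtype.ext a.2

open InvSemigroup in
/-- The presheaf over `E(S)` obtained by restricting a supported action to the idempotents. -/
def SupportedAction.toPresheaf {X S : Type*} [InvSemigroup S] (A : SupportedAction X S) :
    SPresheaf X (ES S) where
  act x e := A.act x e.1
  p x := ⟨A.p x, A.p_idem x⟩
  act_act x e f := A.act_act x e.1 f.1
  act_p x := A.act_p x
  p_act x e := by
    apply Subtype.ext
    show A.p (A.act x e.1) = A.p x * e.1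
    rw [A.p_act, idem_inv e.2, idem_comm e.2 (A.p_idem x), mul_assoc, e.2]

/-- `ξ` is the generalised Munn representation `S → T_Y` (where `Y` is the presheaf
obtained from the supported action by restriction to the idempotents): it sends `s` to
`(α_{s⁻¹}, θ_{s⁻¹})` where `α_{s⁻¹} : X·(s⁻¹s) → X·(ss⁻¹), y ↦ y · s⁻¹` and
`θ_{s⁻¹} : (s⁻¹s)↓ → (ss⁻¹)↓, e ↦ s e s⁻¹`. -/
def IsMunnRep {X S : Type*} [InvSemigroup S] (A : SupportedAction X S)
    (ξ : S → MunnElt A.toPresheaf) : Prop :=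
  ∀ s : S, ((ξ s).e).1 = s⁻¹ * s ∧ ((ξ s).f).1 = s * s⁻¹ ∧
    (∀ x : A.toPresheaf.sub (ξ s).e, ((ξ s).α x).1 = A.act x.1 s⁻¹) ∧
    (∀ h : dOn (ES S) (ξ s).e, (((ξ s).θ h).1).1 = s * h.1.1 * s⁻¹)

section SemilatticeAux

variable {E : Type*} [MeetSL E]

theorem sle_refl (e : E) : sle e e := (MeetSL.idem e).symm

theorem sle_mul_left (e f : E) : sle (e * f) e := by
  show e * f = e * f * e
  rw [mul_assoc, mul_comm f e, ← mul_assoc, MeetSL.idem]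

theorem sle_mul_right (e f : E) : sle (e * f) f := by
  show e * f = e * f * f
  rw [mul_assoc, MeetSL.idem]

theorem sle_trans {a b c : E} (h1 : sle a b) (h2 : sle b c) : sle a c := by
  show a = a * c
  calc a = a * b := h1
    _ = a * (b * c) := by rw [← h2]
    _ = a * b * c := (mul_assoc _ _ _).symm
    _ = a * c := by rw [← h1]

theorem sle_antisymm {a b : E} (h1 : sle a b) (h2 : sle b a) : a = b := by
  calc a = a * b := h1
    _ = b * a := mul_comm _ _
    _ = b := h2.symm

theorem sle_of_le_le {a e f : E} (h1 : sle a e) (h2 : sle a f) : sle a (e * f) := by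
  show a = a * (e * f)
  calc a = a * f := h2
    _ = a * e * f := by rw [← h1]
    _ = a * (e * f) := mul_assoc _ _ _

theorem mul_eq_of_sle {a e : E} (h : sle a e) : a * e = a := h.symm

theorem mul_eq_of_sle' {a e : E} (h : sle a e) : e * a = a := by
  rw [mul_comm]; exact h.symm

end SemilatticeAux

section PresheafAux

variable {X : Type*} {E : Type*} [MeetSL E] (P : SPresheaf X E)

theorem SPresheaf.act_p_mul (x : X) (e : E) : P.act x (P.p x * e) = P.act x e := by
  rw [← P.act_act, P.act_p]

theorem SPresheaf.xle_act (x : X) (e : E) : P.xle (P.act x e) x := by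
  show P.act x e = P.act x (P.p (P.act x e))
  rw [P.p_act, P.act_p_mul]

theorem SPresheaf.act_self {x : X} {e : E} (h : sle (P.p x) e) : P.act x e = x := by
  calc P.act x e = P.act (P.act x (P.p x)) e := by rw [P.act_p]
    _ = P.act x (P.p x * e) := P.act_act _ _ _
    _ = P.act x (P.p x) := by rw [← h]
    _ = x := P.act_p x

theorem SPresheaf.xle_unique {y z z' : X} (hz : P.xle z y) (hz' : P.xle z' y)
    (h : P.p z = P.p z') : z = z' := by
  have hz2 : z = P.act y (P.p z) := hz
  have hz2' : z' = P.act y (P.p z') := hz'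
  rw [h] at hz2; exact hz2.trans hz2'.symm

theorem SPresheaf.sle_p_of_xle {x y : X} (h : P.xle x y) : sle (P.p x) (P.p y) := by
  have h2 : P.p x = P.p (P.act y (P.p x)) := by rw [← h]
  rw [P.p_act] at h2
  show P.p x = P.p x * P.p y
  conv_lhs => rw [h2, mul_comm]

/-- The canonical restriction of `x` to `X·e`. -/
def SPresheaf.restr (x : X) (e : E) : P.sub e :=
  ⟨P.act x e, by rw [P.p_act]; exact sle_mul_right _ _⟩

end PresheafAux

section MunnAux

variable {X : Type*} {E : Type*} [MeetSL E] {P : SPresheaf X E}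

theorem MunnElt.theta_congr (t : MunnElt P) {a b : dOn E t.e} (h : a.1 = b.1) :
    (t.θ a).1 = (t.θ b).1 := by
  have : a = b := Subtype.ext h
  rw [this]

theorem MunnElt.alpha_congr (t : MunnElt P) {a b : P.sub t.e} (h : a.1 = b.1) :
    (t.α a).1 = (t.α b).1 := by
  have : a = b := Subtype.ext h
  rw [this]

theorem MunnElt.theta_symm_congr (t : MunnElt P) {a b : dOn E t.f} (h : a.1 = b.1) :
    (t.θ.symm a).1 = (t.θ.symm b).1 := by
  have : a = b := Subtype.ext h
  rw [this]

theorem MunnElt.theta_top (t : MunnElt P) : (t.θ ⟨t.e, sle_refl t.e⟩).1 = t.f := by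
  refine sle_antisymm (t.θ _).2 ?_
  have h := (t.θ_ord (t.θ.symm ⟨t.f, sle_refl t.f⟩) ⟨t.e, sle_refl t.e⟩).mp
    (t.θ.symm ⟨t.f, sle_refl t.f⟩).2
  rw [Equiv.apply_symm_apply] at h
  exact h

theorem MunnElt.mapsE_dom {t : MunnElt P} {a b : E} (h : t.mapsE a b) : sle a t.e := h.1

theorem MunnElt.mapsE_ran {t : MunnElt P} {a b : E} (h : t.mapsE a b) : sle b t.f := by
  obtain ⟨h1, rfl⟩ := h; exact (t.θ _).2

theorem MunnElt.maps_dom {t : MunnElt P} {x y : X} (h : t.maps x y) : sle (P.p x) t.e := h.1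

theorem MunnElt.maps_fun {t : MunnElt P} {x y y' : X} (h : t.maps x y) (h' : t.maps x y') :
    y = y' := by
  obtain ⟨h1, rfl⟩ := h; obtain ⟨h1', rfl⟩ := h'; rfl

theorem MunnElt.mapsE_fun {t : MunnElt P} {a b b' : E} (h : t.mapsE a b) (h' : t.mapsE a b') :
    b = b' := by
  obtain ⟨h1, rfl⟩ := h; obtain ⟨h1', rfl⟩ := h'; rfl

theorem MunnElt.maps_mapsE {t : MunnElt P} {x y : X} (h : t.maps x y) :
    t.mapsE (P.p x) (P.p y) := by
  obtain ⟨h1, rfl⟩ := h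
  exact ⟨h1, (t.compat ⟨x, h1⟩).symm⟩

theorem MunnElt.maps_ran {t : MunnElt P} {x y : X} (h : t.maps x y) : sle (P.p y) t.f :=
  MunnElt.mapsE_ran (MunnElt.maps_mapsE h)

/-- Extensionality of Munn elements via their graphs. -/
theorem MunnElt.ext_of_graphs {t t' : MunnElt P}
    (hE : ∀ a b, t.mapsE a b ↔ t'.mapsE a b)
    (hM : ∀ x y, t.maps x y ↔ t'.maps x y) : t = t' := by
  have he : t.e = t'.e := by
    apply sle_antisymm
    · exact MunnElt.mapsE_dom ((hE _ _).mp ⟨sle_refl _, rfl⟩)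
    · exact MunnElt.mapsE_dom ((hE _ _).mpr ⟨sle_refl _, rfl⟩)
  have hf : t.f = t'.f := by
    have h1 : t'.mapsE t.e t.f := (hE _ _).mp ⟨sle_refl _, MunnElt.theta_top t⟩
    have h2 : t'.mapsE t.e t'.f := by
      rw [he]; exact ⟨sle_refl _, MunnElt.theta_top t'⟩
    exact MunnElt.mapsE_fun h1 h2
  obtain ⟨e, f, α, θ, ao, to', co⟩ := t
  obtain ⟨e', f', α', θ', ao', to'', co'⟩ := t'
  dsimp at he hf
  subst he; subst hf
  have hα : α = α' := by
    apply Equiv.ext; intro x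
    apply Subtype.ext
    have h1 : MunnElt.maps ⟨e, f, α, θ, ao, to', co⟩ x.1 (α x).1 := ⟨x.2, rfl⟩
    obtain ⟨h2, h3⟩ := (hM _ _).mp h1
    exact h3.symm
  have hθ : θ = θ' := by
    apply Equiv.ext; intro a
    apply Subtype.ext
    have h1 : MunnElt.mapsE ⟨e, f, α, θ, ao, to', co⟩ a.1 (θ a).1 := ⟨a.2, rfl⟩
    obtain ⟨h2, h3⟩ := (hE _ _).mp h1
    exact h3.symm
  subst hα; subst hθ
  rfl

/-- The idempotent Munn element `(id_{X·g}, id_{g↓})`. -/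
def MunnElt.idElt (P : SPresheaf X E) (g : E) : MunnElt P where
  e := g
  f := g
  α := Equiv.refl _
  θ := Equiv.refl _
  α_ord := fun _ _ => Iff.rfl
  θ_ord := fun _ _ => Iff.rfl
  compat := fun _ => rfl

theorem MunnElt.idElt_maps (g : E) (x y : X) :
    (MunnElt.idElt P g).maps x y ↔ sle (P.p x) g ∧ x = y := by
  constructor
  · rintro ⟨h, rfl⟩; exact ⟨h, rfl⟩
  · rintro ⟨h, rfl⟩; exact ⟨h, rfl⟩

theorem MunnElt.idElt_mapsE (g : E) (a b : E) :
    (MunnElt.idElt P g).mapsE a b ↔ sle a g ∧ a = b := by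
  constructor
  · rintro ⟨h, rfl⟩; exact ⟨h, rfl⟩
  · rintro ⟨h, rfl⟩; exact ⟨h, rfl⟩

/-- The inverse `(α⁻¹, θ⁻¹)` of a Munn element. -/
def MunnElt.invElt (t : MunnElt P) : MunnElt P where
  e := t.f
  f := t.e
  α := t.α.symm
  θ := t.θ.symm
  α_ord := fun x y => by
    have h := (t.α_ord (t.α.symm x) (t.α.symm y)).symm
    rwa [t.α.apply_symm_apply, t.α.apply_symm_apply] at h
  θ_ord := fun a b => by
    have h := (t.θ_ord (t.θ.symm a) (t.θ.symm b)).symm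
    rwa [t.θ.apply_symm_apply, t.θ.apply_symm_apply] at h
  compat := fun x => by
    have h := t.compat (t.α.symm x)
    rw [t.α.apply_symm_apply] at h
    have h2 : (⟨P.p x.1, x.2⟩ : dOn E t.f)
        = t.θ ⟨P.p (t.α.symm x).1, (t.α.symm x).2⟩ := Subtype.ext h
    rw [h2, Equiv.symm_apply_apply]

theorem MunnElt.invElt_maps (t : MunnElt P) (x y : X) :
    t.invElt.maps x y ↔ t.maps y x := by
  constructor
  · rintro ⟨h, rfl⟩
    refine ⟨(t.α.symm ⟨x, h⟩).2, ?_⟩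
    show (t.α (t.α.symm ⟨x, h⟩)).1 = x
    rw [t.α.apply_symm_apply]
  · rintro ⟨h, rfl⟩
    refine ⟨(t.α ⟨y, h⟩).2, ?_⟩
    show (t.α.symm (t.α ⟨y, h⟩)).1 = y
    rw [t.α.symm_apply_apply]

theorem MunnElt.invElt_mapsE (t : MunnElt P) (a b : E) :
    t.invElt.mapsE a b ↔ t.mapsE b a := by
  constructor
  · rintro ⟨h, rfl⟩
    refine ⟨(t.θ.symm ⟨a, h⟩).2, ?_⟩
    show (t.θ (t.θ.symm ⟨a, h⟩)).1 = a
    rw [t.θ.apply_symm_apply]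
  · rintro ⟨h, rfl⟩
    refine ⟨(t.θ ⟨b, h⟩).2, ?_⟩
    show (t.θ.symm (t.θ ⟨b, h⟩)).1 = b
    rw [t.θ.symm_apply_apply]

/-- `θ` preserves meets. -/
theorem MunnElt.theta_meet (t : MunnElt P) (a b : dOn E t.e) :
    (t.θ ⟨a.1 * b.1, sle_trans (sle_mul_left _ _) a.2⟩).1 = (t.θ a).1 * (t.θ b).1 := by
  apply sle_antisymm
  · apply sle_of_le_le
    · exact (t.θ_ord _ a).mp (sle_mul_left _ _)
    · exact (t.θ_ord _ b).mp (sle_mul_right _ _)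
  · set z := t.θ.symm ⟨(t.θ a).1 * (t.θ b).1, sle_trans (sle_mul_left _ _) (t.θ a).2⟩ with hz
    have hza : sle z.1 a.1 := by
      have h := (t.θ_ord z a).mpr
      rw [hz, Equiv.apply_symm_apply] at h
      exact h (sle_mul_left _ _)
    have hzb : sle z.1 b.1 := by
      have h := (t.θ_ord z b).mpr
      rw [hz, Equiv.apply_symm_apply] at h
      exact h (sle_mul_right _ _)
    have hzab : sle z.1 (a.1 * b.1) := sle_of_le_le hza hzb
    have h := (t.θ_ord z ⟨a.1 * b.1, sle_trans (sle_mul_left _ _) a.2⟩).mp hzab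
    rw [hz, Equiv.apply_symm_apply] at h
    exact h

/-- Naturality: `α` commutes with restriction. -/
theorem MunnElt.naturality (t : MunnElt P) (x : P.sub t.e) (g : E)
    (h1 : sle (P.p (P.act x.1 g)) t.e) (h2 : sle (P.p x.1 * g) t.e) :
    (t.α ⟨P.act x.1 g, h1⟩).1 = P.act (t.α x).1 (t.θ ⟨P.p x.1 * g, h2⟩).1 := by
  have hle : P.xle (P.act x.1 g) x.1 := P.xle_act x.1 g
  have hz : P.xle (t.α ⟨P.act x.1 g, h1⟩).1 (t.α x).1 := by
    have := (t.α_ord ⟨P.act x.1 g, h1⟩ x).mp hle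
    exact this
  have hpz : P.p (t.α ⟨P.act x.1 g, h1⟩).1 = (t.θ ⟨P.p x.1 * g, h2⟩).1 := by
    rw [t.compat ⟨P.act x.1 g, h1⟩]
    exact t.theta_congr (P.p_act x.1 g)
  have hθle : sle (t.θ ⟨P.p x.1 * g, h2⟩).1 (t.θ ⟨P.p x.1, x.2⟩).1 :=
    (t.θ_ord _ _).mp (sle_mul_left _ _)
  have hθle' : sle (t.θ ⟨P.p x.1 * g, h2⟩).1 (P.p (t.α x).1) := by
    rw [t.compat x]; exact hθle
  have hpz' : P.p (P.act (t.α x).1 (t.θ ⟨P.p x.1 * g, h2⟩).1) = (t.θ ⟨P.p x.1 * g, h2⟩).1 := by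
    rw [P.p_act]
    exact mul_eq_of_sle' hθle'
  have hz' : P.xle (P.act (t.α x).1 (t.θ ⟨P.p x.1 * g, h2⟩).1) (t.α x).1 := P.xle_act _ _
  exact P.xle_unique hz hz' (by rw [hpz, hpz'])

end MunnAux
section MunnMulAux

variable {X : Type*} {E : Type*} [MeetSL E] {P : SPresheaf X E}
variable {mul : MunnElt P → MunnElt P → MunnElt P}

theorem munn_mul_assoc (hmul : IsMunnMul mul) (a b c : MunnElt P) :
    mul (mul a b) c = mul a (mul b c) := by
  apply MunnElt.ext_of_graphs
  · intro h k
    rw [(hmul (mul a b) c).2, (hmul a (mul b c)).2]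
    constructor
    · rintro ⟨m, hm, hk⟩
      rw [(hmul a b).2] at hk
      obtain ⟨n, hn1, hn2⟩ := hk
      exact ⟨n, ((hmul b c).2 _ _).mpr ⟨m, hm, hn1⟩, hn2⟩
    · rintro ⟨n, hn, h2⟩
      rw [(hmul b c).2] at hn
      obtain ⟨m, hm, h1⟩ := hn
      exact ⟨m, hm, ((hmul a b).2 _ _).mpr ⟨n, h1, h2⟩⟩
  · intro x z
    rw [(hmul (mul a b) c).1, (hmul a (mul b c)).1]
    constructor
    · rintro ⟨m, hm, hk⟩
      rw [(hmul a b).1] at hk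
      obtain ⟨n, hn1, hn2⟩ := hk
      exact ⟨n, ((hmul b c).1 _ _).mpr ⟨m, hm, hn1⟩, hn2⟩
    · rintro ⟨n, hn, h2⟩
      rw [(hmul b c).1] at hn
      obtain ⟨m, hm, h1⟩ := hn
      exact ⟨m, hm, ((hmul a b).1 _ _).mpr ⟨n, h1, h2⟩⟩

theorem mul_idElt (hmul : IsMunnMul mul) (g h : E) :
    mul (MunnElt.idElt P g) (MunnElt.idElt P h) = MunnElt.idElt P (g * h) := by
  apply MunnElt.ext_of_graphs
  · intro a b
    rw [(hmul _ _).2, MunnElt.idElt_mapsE]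
    constructor
    · rintro ⟨m, hm, hk⟩
      rw [MunnElt.idElt_mapsE] at hm hk
      obtain ⟨hm1, rfl⟩ := hm
      obtain ⟨hk1, rfl⟩ := hk
      exact ⟨sle_of_le_le hk1 hm1, rfl⟩
    · rintro ⟨h1, rfl⟩
      exact ⟨a, (MunnElt.idElt_mapsE _ _ _).mpr ⟨sle_trans h1 (sle_mul_right g h), rfl⟩,
        (MunnElt.idElt_mapsE _ _ _).mpr ⟨sle_trans h1 (sle_mul_left g h), rfl⟩⟩
  · intro x y
    rw [(hmul _ _).1, MunnElt.idElt_maps]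
    constructor
    · rintro ⟨m, hm, hk⟩
      rw [MunnElt.idElt_maps] at hm hk
      obtain ⟨hm1, rfl⟩ := hm
      obtain ⟨hk1, rfl⟩ := hk
      exact ⟨sle_of_le_le hk1 hm1, rfl⟩
    · rintro ⟨h1, rfl⟩
      exact ⟨x, (MunnElt.idElt_maps _ _ _).mpr ⟨sle_trans h1 (sle_mul_right g h), rfl⟩,
        (MunnElt.idElt_maps _ _ _).mpr ⟨sle_trans h1 (sle_mul_left g h), rfl⟩⟩

theorem idem_eq_idElt (hmul : IsMunnMul mul) {t : MunnElt P} (ht : mul t t = t) :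
    t = MunnElt.idElt P t.e := by
  have hEdiag : ∀ a b, t.mapsE a b → a = b := by
    intro a b hab
    have h2 : (mul t t).mapsE a b := by rw [ht]; exact hab
    rw [(hmul t t).2] at h2
    obtain ⟨m, hm, hk⟩ := h2
    have hmb : m = b := MunnElt.mapsE_fun hm hab
    subst hmb
    obtain ⟨hk1, e1⟩ := hk
    obtain ⟨h2', e2⟩ := hab
    have h3 : t.θ ⟨m, hk1⟩ = t.θ ⟨a, h2'⟩ := Subtype.ext (e1.trans e2.symm)
    exact (congrArg Subtype.val (t.θ.injective h3)).symm
  have hMdiag : ∀ x y, t.maps x y → x = y := by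
    intro x y hxy
    have h2 : (mul t t).maps x y := by rw [ht]; exact hxy
    rw [(hmul t t).1] at h2
    obtain ⟨m, hm, hk⟩ := h2
    have hmb : m = y := MunnElt.maps_fun hm hxy
    subst hmb
    obtain ⟨hk1, e1⟩ := hk
    obtain ⟨h2', e2⟩ := hxy
    have h3 : t.α ⟨m, hk1⟩ = t.α ⟨x, h2'⟩ := Subtype.ext (e1.trans e2.symm)
    exact (congrArg Subtype.val (t.α.injective h3)).symm
  apply MunnElt.ext_of_graphs
  · intro a b
    rw [MunnElt.idElt_mapsE]
    constructor
    · intro hab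
      exact ⟨MunnElt.mapsE_dom hab, hEdiag a b hab⟩
    · rintro ⟨h1, rfl⟩
      have hx : t.mapsE a (t.θ ⟨a, h1⟩).1 := ⟨h1, rfl⟩
      have := hEdiag _ _ hx
      rwa [← this] at hx
  · intro x y
    rw [MunnElt.idElt_maps]
    constructor
    · intro hxy
      exact ⟨MunnElt.maps_dom hxy, hMdiag x y hxy⟩
    · rintro ⟨h1, rfl⟩
      have hx : t.maps x (t.α ⟨x, h1⟩).1 := ⟨h1, rfl⟩
      have := hMdiag _ _ hx
      rwa [← this] at hx

theorem mul_invElt_left (hmul : IsMunnMul mul) (t : MunnElt P) :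
    mul t.invElt t = MunnElt.idElt P t.e := by
  apply MunnElt.ext_of_graphs
  · intro a b
    rw [(hmul t.invElt t).2, MunnElt.idElt_mapsE]
    constructor
    · rintro ⟨m, hm, hk⟩
      rw [MunnElt.invElt_mapsE] at hk
      refine ⟨MunnElt.mapsE_dom hm, ?_⟩
      obtain ⟨h1, e1⟩ := hm
      obtain ⟨h2, e2⟩ := hk
      have h3 : t.θ ⟨a, h1⟩ = t.θ ⟨b, h2⟩ := Subtype.ext (e1.trans e2.symm)
      exact congrArg Subtype.val (t.θ.injective h3)
    · rintro ⟨h1, rfl⟩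
      exact ⟨(t.θ ⟨a, h1⟩).1, ⟨h1, rfl⟩, (MunnElt.invElt_mapsE t _ _).mpr ⟨h1, rfl⟩⟩
  · intro x y
    rw [(hmul t.invElt t).1, MunnElt.idElt_maps]
    constructor
    · rintro ⟨m, hm, hk⟩
      rw [MunnElt.invElt_maps] at hk
      refine ⟨MunnElt.maps_dom hm, ?_⟩
      obtain ⟨h1, e1⟩ := hm
      obtain ⟨h2, e2⟩ := hk
      have h3 : t.α ⟨x, h1⟩ = t.α ⟨y, h2⟩ := Subtype.ext (e1.trans e2.symm)
      exact congrArg Subtype.val (t.α.injective h3)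
    · rintro ⟨h1, rfl⟩
      exact ⟨(t.α ⟨x, h1⟩).1, ⟨h1, rfl⟩, (MunnElt.invElt_maps t _ _).mpr ⟨h1, rfl⟩⟩

theorem mul_invElt_right (hmul : IsMunnMul mul) (t : MunnElt P) :
    mul t t.invElt = MunnElt.idElt P t.f := by
  apply MunnElt.ext_of_graphs
  · intro a b
    rw [(hmul t t.invElt).2, MunnElt.idElt_mapsE]
    constructor
    · rintro ⟨m, hm, hk⟩
      rw [MunnElt.invElt_mapsE] at hm
      exact ⟨MunnElt.mapsE_ran hm, MunnElt.mapsE_fun hm hk⟩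
    · rintro ⟨h1, rfl⟩
      have hmm : t.mapsE (t.θ.symm ⟨a, h1⟩).1 a := (t.invElt_mapsE a _).mp ⟨h1, rfl⟩
      exact ⟨(t.θ.symm ⟨a, h1⟩).1, ⟨h1, rfl⟩, hmm⟩
  · intro x y
    rw [(hmul t t.invElt).1, MunnElt.idElt_maps]
    constructor
    · rintro ⟨m, hm, hk⟩
      rw [MunnElt.invElt_maps] at hm
      exact ⟨MunnElt.maps_ran hm, MunnElt.maps_fun hm hk⟩
    · rintro ⟨h1, rfl⟩
      have hmm : t.maps (t.α.symm ⟨x, h1⟩).1 x := (t.invElt_maps x _).mp ⟨h1, rfl⟩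
      exact ⟨(t.α.symm ⟨x, h1⟩).1, ⟨h1, rfl⟩, hmm⟩

theorem mul_idElt_right (hmul : IsMunnMul mul) (t : MunnElt P) :
    mul t (MunnElt.idElt P t.e) = t := by
  apply MunnElt.ext_of_graphs
  · intro a b
    rw [(hmul _ _).2]
    constructor
    · rintro ⟨m, hm, hk⟩
      rw [MunnElt.idElt_mapsE] at hm
      obtain ⟨hm1, rfl⟩ := hm
      exact hk
    · intro h
      exact ⟨a, (MunnElt.idElt_mapsE _ _ _).mpr ⟨MunnElt.mapsE_dom h, rfl⟩, h⟩
  · intro x y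
    rw [(hmul _ _).1]
    constructor
    · rintro ⟨m, hm, hk⟩
      rw [MunnElt.idElt_maps] at hm
      obtain ⟨hm1, rfl⟩ := hm
      exact hk
    · intro h
      exact ⟨x, (MunnElt.idElt_maps _ _ _).mpr ⟨MunnElt.maps_dom h, rfl⟩, h⟩

theorem mul_idElt_left (hmul : IsMunnMul mul) (t : MunnElt P) :
    mul (MunnElt.idElt P t.f) t = t := by
  apply MunnElt.ext_of_graphs
  · intro a b
    rw [(hmul _ _).2]
    constructor
    · rintro ⟨m, hm, hk⟩
      rw [MunnElt.idElt_mapsE] at hk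
      obtain ⟨hk1, rfl⟩ := hk
      exact hm
    · intro h
      exact ⟨b, h, (MunnElt.idElt_mapsE _ _ _).mpr ⟨MunnElt.mapsE_ran h, rfl⟩⟩
  · intro x y
    rw [(hmul _ _).1]
    constructor
    · rintro ⟨m, hm, hk⟩
      rw [MunnElt.idElt_maps] at hk
      obtain ⟨hk1, rfl⟩ := hk
      exact hm
    · intro h
      exact ⟨y, h, (MunnElt.idElt_maps _ _ _).mpr ⟨MunnElt.maps_ran h, rfl⟩⟩

theorem munn_inv_unique (hmul : IsMunnMul mul) {t u : MunnElt P}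
    (h1 : mul (mul t u) t = t) (h2 : mul (mul u t) u = u) : u = t.invElt := by
  have comm : ∀ p q : MunnElt P, mul p p = p → mul q q = q → mul p q = mul q p := by
    intro p q hp hq
    rw [idem_eq_idElt hmul hp, idem_eq_idElt hmul hq, mul_idElt hmul, mul_idElt hmul,
      mul_comm]
  letI : Mul (MunnElt P) := ⟨mul⟩
  letI : Semigroup (MunnElt P) := { mul_assoc := munn_mul_assoc hmul }
  set v := t.invElt with hv
  have h1' : t * u * t = t := h1
  have h2' : u * t * u = u := h2
  have hv1' : t * v * t = t := by
    show mul (mul t v) t = t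
    rw [hv, mul_invElt_right hmul, mul_idElt_left hmul]
  have hv2' : v * t * v = v := by
    show mul (mul v t) v = v
    rw [hv, mul_invElt_left hmul]
    exact mul_idElt_left hmul t.invElt
  have comm' : ∀ p q : MunnElt P, p * p = p → q * q = q → p * q = q * p := comm
  have idem : ∀ a b : MunnElt P, a * b * a = a → (a * b) * (a * b) = a * b := by
    intro a b h
    calc (a * b) * (a * b) = ((a * b) * a) * b := by simp only [mul_assoc]
      _ = a * b := by rw [h]
  have key : ∀ w z : MunnElt P, t * w * t = t → w * t * w = w → t * z * t = t →
      z * t * z = z → w = w * t * z := by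
    intro w z hw1 hw2 hz1 hz2
    have iw : (t * w) * (t * w) = t * w := by
      calc (t * w) * (t * w) = (t * w * t) * w := by simp only [mul_assoc]
        _ = t * w := by rw [hw1]
    have iz : (t * z) * (t * z) = t * z := by
      calc (t * z) * (t * z) = (t * z * t) * z := by simp only [mul_assoc]
        _ = t * z := by rw [hz1]
    calc w = w * t * w := hw2.symm
      _ = w * (t * z * t) * w := by rw [hz1]
      _ = w * ((t * z) * (t * w)) := by simp only [mul_assoc]
      _ = w * ((t * w) * (t * z)) := by rw [comm' _ _ iw iz]
      _ = (w * t * w) * (t * z) := by simp only [mul_assoc]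
      _ = w * (t * z) := by rw [hw2]
      _ = w * t * z := (mul_assoc _ _ _).symm
  have ku : u = u * t * v := key u v h1' h2' hv1' hv2'
  have kv : v = v * t * u := key v u hv1' hv2' h1' h2'
  have iut : (u * t) * (u * t) = u * t := idem u t h2'
  have ivt : (v * t) * (v * t) = v * t := idem v t hv2'
  calc u = u * t * v := ku
    _ = u * t * (v * t * u) := by rw [← kv]
    _ = (u * t) * (v * t) * u := by simp only [mul_assoc]
    _ = (v * t) * (u * t) * u := by rw [comm' _ _ iut ivt]
    _ = v * (t * u * t) * u := by simp only [mul_assoc]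
    _ = v * t * u := by rw [h1']
    _ = v := kv.symm

theorem mul_e_le (hmul : IsMunnMul mul) (a b : MunnElt P) : sle (mul b a).e a.e := by
  have h : (mul b a).mapsE (mul b a).e ((mul b a).θ ⟨_, sle_refl _⟩).1 := ⟨sle_refl _, rfl⟩
  rw [(hmul b a).2] at h
  obtain ⟨m, h1, _⟩ := h
  exact MunnElt.mapsE_dom h1

theorem mul_e_theta (hmul : IsMunnMul mul) (a b : MunnElt P) :
    (a.θ ⟨(mul b a).e, mul_e_le hmul a b⟩).1 = a.f * b.e := by
  apply sle_antisymm
  · apply sle_of_le_le (a.θ _).2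
    have h : (mul b a).mapsE (mul b a).e ((mul b a).θ ⟨_, sle_refl _⟩).1 := ⟨sle_refl _, rfl⟩
    rw [(hmul b a).2] at h
    obtain ⟨m, h1, h2⟩ := h
    obtain ⟨hh, e1⟩ := h1
    have h3 : (a.θ ⟨(mul b a).e, mul_e_le hmul a b⟩).1 = m := e1
    rw [h3]
    exact MunnElt.mapsE_dom h2
  · set c := a.θ.symm ⟨a.f * b.e, sle_mul_left _ _⟩ with hc
    have hcm : a.mapsE c.1 (a.f * b.e) := by
      refine ⟨c.2, ?_⟩
      show (a.θ c).1 = a.f * b.e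
      rw [hc, Equiv.apply_symm_apply]
    have hbm : b.mapsE (a.f * b.e) ((b.θ ⟨a.f * b.e, sle_mul_right _ _⟩).1) :=
      ⟨sle_mul_right _ _, rfl⟩
    have hw : (mul b a).mapsE c.1 ((b.θ ⟨a.f * b.e, sle_mul_right _ _⟩).1) :=
      ((hmul b a).2 _ _).mpr ⟨a.f * b.e, hcm, hbm⟩
    have hcw : sle c.1 (mul b a).e := MunnElt.mapsE_dom hw
    have h4 := (a.θ_ord c ⟨(mul b a).e, mul_e_le hmul a b⟩).mp hcw
    rw [hc, Equiv.apply_symm_apply] at h4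
    exact h4

end MunnMulAux
section FappAux

variable {X : Type*} {E : Type*} [MeetSL E] {P : SPresheaf X E}

/-- Total function induced by a Munn element: restrict then apply. -/
def MunnElt.Fapp (t : MunnElt P) (x : X) : X := (t.α (P.restr x t.e)).1

theorem MunnElt.Fapp_maps (t : MunnElt P) (x : X) : t.maps (P.act x t.e) (t.Fapp x) :=
  ⟨(P.restr x t.e).2, rfl⟩

theorem MunnElt.p_Fapp (t : MunnElt P) (x : X) :
    P.p (t.Fapp x) = (t.θ ⟨P.p x * t.e, sle_mul_right _ _⟩).1 := by
  show P.p (t.α (P.restr x t.e)).1 = _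
  rw [t.compat (P.restr x t.e)]
  exact t.theta_congr (P.p_act x t.e)

theorem MunnElt.Fapp_idElt (g : E) (x : X) : (MunnElt.idElt P g).Fapp x = P.act x g := rfl

variable {mul : MunnElt P → MunnElt P → MunnElt P}

theorem MunnElt.Fapp_mul (hmul : IsMunnMul mul) (a b : MunnElt P) (x : X) :
    (mul b a).Fapp x = b.Fapp (a.Fapp x) := by
  set w := mul b a with hw
  have hwe : sle w.e a.e := mul_e_le hmul a b
  have hq : P.p (a.Fapp x) = (a.θ ⟨P.p x * a.e, sle_mul_right _ _⟩).1 := a.p_Fapp x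
  have hqf : sle (P.p (a.Fapp x)) a.f := by rw [hq]; exact (a.θ _).2
  have h1' : sle (P.p (P.act (P.restr x a.e).1 w.e)) a.e := by
    rw [P.p_act]; exact sle_trans (sle_mul_right _ _) hwe
  have h2' : sle (P.p (P.restr x a.e).1 * w.e) a.e := sle_trans (sle_mul_right _ _) hwe
  have hnat := a.naturality (P.restr x a.e) w.e h1' h2'
  -- compute the θ-term
  have hθ : (a.θ ⟨P.p (P.restr x a.e).1 * w.e, h2'⟩).1
      = P.p (a.Fapp x) * (a.f * b.e) := by
    have hmeet := a.theta_meet ⟨P.p x * a.e, sle_mul_right _ _⟩ ⟨w.e, hwe⟩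
    have hcongr : (a.θ ⟨P.p (P.restr x a.e).1 * w.e, h2'⟩).1
        = (a.θ ⟨(P.p x * a.e) * w.e, sle_trans (sle_mul_left _ _) (sle_mul_right _ _)⟩).1 :=
      a.theta_congr (by show P.p (P.act x a.e) * w.e = P.p x * a.e * w.e; rw [P.p_act])
    rw [hcongr]
    have : (a.θ ⟨(P.p x * a.e) * w.e, sle_trans (sle_mul_left _ _) (sle_mul_right _ _)⟩).1
        = (a.θ ⟨P.p x * a.e, sle_mul_right _ _⟩).1 * (a.θ ⟨w.e, hwe⟩).1 := hmeet
    rw [this, mul_e_theta hmul a b, hq]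
  have hstep : (a.α ⟨P.act (P.restr x a.e).1 w.e, h1'⟩).1 = P.act (a.Fapp x) b.e := by
    have hred : P.p (a.Fapp x) * (a.f * b.e) = P.p (a.Fapp x) * b.e := by
      rw [← mul_assoc, mul_eq_of_sle hqf]
    rw [hnat, hθ, hred]
    show P.act (a.Fapp x) (P.p (a.Fapp x) * b.e) = P.act (a.Fapp x) b.e
    exact P.act_p_mul _ _
  have hdom : sle (P.p (P.act x w.e)) a.e := by
    rw [P.p_act]; exact sle_trans (sle_mul_right _ _) hwe
  have hamaps : a.maps (P.act x w.e) (P.act (a.Fapp x) b.e) := by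
    refine ⟨hdom, ?_⟩
    have hx : P.act x w.e = P.act (P.restr x a.e).1 w.e := by
      show P.act x w.e = P.act (P.act x a.e) w.e
      rw [P.act_act, mul_eq_of_sle' hwe]
    exact (a.alpha_congr hx).trans hstep
  have hb : b.maps (P.act (a.Fapp x) b.e) (b.Fapp (a.Fapp x)) := b.Fapp_maps _
  have hcomp : w.maps (P.act x w.e) (b.Fapp (a.Fapp x)) :=
    ((hmul b a).1 _ _).mpr ⟨_, hamaps, hb⟩
  exact MunnElt.maps_fun (w.Fapp_maps x) hcomp

end FappAux

namespace InvSemigroup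

variable {S : Type*} [InvSemigroup S]

theorem conj_idem (s : S) {g : S} (hg : g * g = g) :
    (s * g * s⁻¹) * (s * g * s⁻¹) = s * g * s⁻¹ := by
  have hcomm : g * (s⁻¹ * s) = (s⁻¹ * s) * g := idem_comm hg (d_idem s)
  calc (s * g * s⁻¹) * (s * g * s⁻¹) = s * (g * (s⁻¹ * s)) * (g * s⁻¹) := by
        simp only [mul_assoc]
    _ = s * ((s⁻¹ * s) * g) * (g * s⁻¹) := by rw [hcomm]
    _ = (s * s⁻¹ * s) * (g * (g * s⁻¹)) := by simp only [mul_assoc]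
    _ = s * (g * (g * s⁻¹)) := by rw [mul_inv_mul]
    _ = s * ((g * g) * s⁻¹) := by simp only [mul_assoc]
    _ = s * g * s⁻¹ := by rw [hg, mul_assoc]

theorem conj_le (s g : S) : (s * g * s⁻¹) * (s * s⁻¹) = s * g * s⁻¹ := by
  calc (s * g * s⁻¹) * (s * s⁻¹) = s * g * (s⁻¹ * s * s⁻¹) := by simp only [mul_assoc]
    _ = s * g * s⁻¹ := by rw [inv_mul_inv]

theorem conj_conj (s : S) {c : S} (hc : c * c = c) (hle : c * (s⁻¹ * s) = c) :
    s⁻¹ * (s * c * s⁻¹) * s = c := by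
  have hcomm : c * (s⁻¹ * s) = (s⁻¹ * s) * c := idem_comm hc (d_idem s)
  calc s⁻¹ * (s * c * s⁻¹) * s = (s⁻¹ * s) * (c * (s⁻¹ * s)) := by simp only [mul_assoc]
    _ = (s⁻¹ * s) * ((s⁻¹ * s) * c) := by rw [hcomm]
    _ = ((s⁻¹ * s) * (s⁻¹ * s)) * c := by simp only [mul_assoc]
    _ = (s⁻¹ * s) * c := by rw [d_idem]
    _ = c * (s⁻¹ * s) := (idem_comm (d_idem s) hc)
    _ = c := hle

/-- Key domain computation: `g ≤ (su)⁻¹(su)` iff `g ≤ u⁻¹u` and `ugu⁻¹ ≤ s⁻¹s`. -/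
theorem dom_iff (s u : S) {g : S} (hg : g * g = g) :
    g * (u⁻¹ * s⁻¹ * (s * u)) = g ↔
      g * (u⁻¹ * u) = g ∧ (u * g * u⁻¹) * (s⁻¹ * s) = u * g * u⁻¹ := by
  constructor
  · intro h
    have h1 : g * (u⁻¹ * u) = g := by
      calc g * (u⁻¹ * u) = (g * (u⁻¹ * s⁻¹ * (s * u))) * (u⁻¹ * u) := by rw [h]
        _ = g * (u⁻¹ * s⁻¹ * (s * (u * u⁻¹ * u))) := by simp only [mul_assoc]
        _ = g * (u⁻¹ * s⁻¹ * (s * u)) := by rw [mul_inv_mul]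
        _ = g := h
    refine ⟨h1, ?_⟩
    calc u * g * u⁻¹ * (s⁻¹ * s)
        = u * (g * (u⁻¹ * s⁻¹ * (s * u))) * (u⁻¹ * (s⁻¹ * s)) := by
          rw [h]; simp only [mul_assoc]
      _ = u * g * (u⁻¹ * ((s⁻¹ * s) * ((u * u⁻¹) * (s⁻¹ * s)))) := by simp only [mul_assoc]
      _ = u * g * (u⁻¹ * ((s⁻¹ * s) * ((s⁻¹ * s) * (u * u⁻¹)))) := by
          rw [idem_comm (r_idem u) (d_idem s)]
      _ = u * g * (u⁻¹ * (((s⁻¹ * s) * (s⁻¹ * s)) * (u * u⁻¹))) := by simp only [mul_assoc]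
      _ = u * g * (u⁻¹ * ((s⁻¹ * s) * (u * u⁻¹))) := by rw [d_idem]
      _ = u * (g * (u⁻¹ * s⁻¹ * (s * u))) * u⁻¹ := by simp only [mul_assoc]
      _ = u * g * u⁻¹ := by rw [h]
  · rintro ⟨h1, h2⟩
    calc g * (u⁻¹ * s⁻¹ * (s * u))
        = (g * (u⁻¹ * u)) * (u⁻¹ * s⁻¹ * (s * u)) := by rw [h1]
      _ = g * ((u⁻¹ * u * u⁻¹) * (s⁻¹ * (s * u))) := by simp only [mul_assoc]
      _ = g * (u⁻¹ * (s⁻¹ * (s * u))) := by rw [inv_mul_inv]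
      _ = (g * (u⁻¹ * u)) * (u⁻¹ * (s⁻¹ * s) * u) := by rw [h1]; simp only [mul_assoc]
      _ = ((u⁻¹ * u) * g) * (u⁻¹ * (s⁻¹ * s) * u) := by rw [idem_comm (d_idem u) hg]
      _ = u⁻¹ * ((u * g * u⁻¹) * (s⁻¹ * s)) * u := by simp only [mul_assoc]
      _ = u⁻¹ * (u * g * u⁻¹) * u := by rw [h2]
      _ = g := conj_conj u hg h1

end InvSemigroup
section ForwardAux

open InvSemigroup

variable {X S : Type*} [InvSemigroup S] {P : SPresheaf X (ES S)}
variable {mul : MunnElt P → MunnElt P → MunnElt P}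

/-- Conjugation `e ↦ s⁻¹ e s` on idempotents. -/
def conjR (s : S) (e : ES S) : ES S :=
  ⟨s⁻¹ * e.1 * s, by have h := conj_idem s⁻¹ e.2; rwa [InvSemigroup.inv_inv] at h⟩

/-- Conjugation `e ↦ s e s⁻¹` on idempotents. -/
def conjL (s : S) (e : ES S) : ES S := ⟨s * e.1 * s⁻¹, conj_idem s e.2⟩

/-- The map induced on idempotents by a homomorphism to the Munn semigroup. -/
def theta0 (φ : S → MunnElt P) (e : ES S) : ES S := (φ e.1).e

/-- The action of `S` on `X` induced by a homomorphism to the Munn semigroup. -/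
def actF (φ : S → MunnElt P) (x : X) (s : S) : X := (φ s⁻¹).Fapp x

theorem fwd_idem (hmul : IsMunnMul mul) (φ : S → MunnElt P) (hhom : ∀ s t : S, φ (s * t) = mul (φ s) (φ t)) : ∀ e : ES S, φ e.1 = MunnElt.idElt P (theta0 φ e) :=
  fun e => idem_eq_idElt hmul (by rw [← hhom, e.2])

theorem fwd_inv (hmul : IsMunnMul mul) (φ : S → MunnElt P) (hhom : ∀ s t : S, φ (s * t) = mul (φ s) (φ t)) : ∀ s : S, φ s⁻¹ = (φ s).invElt := by
  intro s
  apply munn_inv_unique hmul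
  · rw [← hhom, ← hhom, mul_inv_mul]
  · rw [← hhom, ← hhom, inv_mul_inv]

theorem fwd_theta0_mul (hmul : IsMunnMul mul) (φ : S → MunnElt P) (hhom : ∀ s t : S, φ (s * t) = mul (φ s) (φ t)) : ∀ e f : ES S, theta0 φ (e * f) = theta0 φ e * theta0 φ f := by
  intro e f
  show (φ (e.1 * f.1)).e = _
  rw [hhom, fwd_idem hmul φ hhom e, fwd_idem hmul φ hhom f, mul_idElt hmul]
  rfl

theorem fwd_act_idem (hmul : IsMunnMul mul) (φ : S → MunnElt P) (hhom : ∀ s t : S, φ (s * t) = mul (φ s) (φ t)) : ∀ (x : X) (e : ES S), actF φ x e.1 = P.act x (theta0 φ e) := by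
  intro x e
  show (φ e.1⁻¹).Fapp x = _
  rw [idem_inv e.2, fwd_idem hmul φ hhom e]
  rfl

theorem fwd_act_act (hmul : IsMunnMul mul) (φ : S → MunnElt P) (hhom : ∀ s t : S, φ (s * t) = mul (φ s) (φ t)) : ∀ (x : X) (s u : S), actF φ (actF φ x s) u = actF φ x (s * u) := by
  intro x s u
  show (φ u⁻¹).Fapp ((φ s⁻¹).Fapp x) = (φ (s * u)⁻¹).Fapp x
  rw [InvSemigroup.mul_inv_rev, hhom]
  exact (MunnElt.Fapp_mul hmul (φ s⁻¹) (φ u⁻¹) x).symm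

theorem fwd_conj (hmul : IsMunnMul mul) (φ : S → MunnElt P) (hhom : ∀ s t : S, φ (s * t) = mul (φ s) (φ t)) (s : S) (e' : ES S) :
    φ (s⁻¹ * e'.1 * s)
      = mul (mul (φ s).invElt (MunnElt.idElt P (theta0 φ e'))) (φ s) := by
  rw [hhom (s⁻¹ * e'.1) s, hhom s⁻¹ e'.1, fwd_inv hmul φ hhom s, fwd_idem hmul φ hhom e']

theorem fwd_key_le (hmul : IsMunnMul mul) (φ : S → MunnElt P) (hhom : ∀ s t : S, φ (s * t) = mul (φ s) (φ t)) (s : S) (e' : ES S) : sle (theta0 φ (conjR s e')) ((φ s).e) := by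
  have h := mul_e_le hmul (φ s) (mul (φ s).invElt (MunnElt.idElt P (theta0 φ e')))
  rw [← fwd_conj hmul φ hhom s e'] at h
  exact h

theorem fwd_key (hmul : IsMunnMul mul) (φ : S → MunnElt P) (hhom : ∀ s t : S, φ (s * t) = mul (φ s) (φ t)) (s : S) (e' : ES S) :
    ((φ s).θ ⟨theta0 φ (conjR s e'), fwd_key_le hmul φ hhom s e'⟩).1
      = theta0 φ e' * (φ s).f := by
  have hBe : (mul (φ s).invElt (MunnElt.idElt P (theta0 φ e'))).e
      = theta0 φ e' * (φ s).f := by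
    have h2 := mul_e_theta hmul (MunnElt.idElt P (theta0 φ e')) (φ s).invElt
    exact h2
  have h4 : theta0 φ (conjR s e')
      = (mul (mul (φ s).invElt (MunnElt.idElt P (theta0 φ e'))) (φ s)).e :=
    congrArg MunnElt.e (fwd_conj hmul φ hhom s e')
  have h5 := (φ s).theta_congr
    (a := ⟨theta0 φ (conjR s e'), fwd_key_le hmul φ hhom s e'⟩)
    (b := ⟨(mul (mul (φ s).invElt (MunnElt.idElt P (theta0 φ e'))) (φ s)).e,
      mul_e_le hmul (φ s) (mul (φ s).invElt (MunnElt.idElt P (theta0 φ e')))⟩) h4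
  rw [h5, mul_e_theta hmul (φ s) (mul (φ s).invElt (MunnElt.idElt P (theta0 φ e'))), hBe]
  exact mul_eq_of_sle' (sle_mul_right _ _)

theorem fwd_p_act (hmul : IsMunnMul mul) (φ : S → MunnElt P) (hhom : ∀ s t : S, φ (s * t) = mul (φ s) (φ t)) (x : X) (s : S) :
    P.p (actF φ x s)
      = ((φ s).θ.symm ⟨P.p x * (φ s).f, sle_mul_right _ _⟩).1 := by
  show P.p ((φ s⁻¹).Fapp x) = _
  rw [fwd_inv hmul φ hhom s]
  exact ((φ s).invElt).p_Fapp x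

end ForwardAux
section BackwardAux

variable {X S : Type*} [InvSemigroup S] {P : SPresheaf X (ES S)}

theorem sle_ES_iff {a b : ES S} : sle a b ↔ a.1 * b.1 = a.1 :=
  ⟨fun h => (congrArg Subtype.val h).symm, fun h => Subtype.ext h.symm⟩

theorem InvSemigroup.conj_le' (s g : S) : (s⁻¹ * g * s) * (s⁻¹ * s) = s⁻¹ * g * s := by
  have h := InvSemigroup.conj_le s⁻¹ g
  rwa [InvSemigroup.inv_inv] at h

theorem InvSemigroup.conj_conj' (s : S) {c : S} (hc : c * c = c) (hle : c * (s * s⁻¹) = c) :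
    s * (s⁻¹ * c * s) * s⁻¹ = c := by
  have h := InvSemigroup.conj_conj s⁻¹ hc (by rwa [InvSemigroup.inv_inv])
  rwa [InvSemigroup.inv_inv] at h

theorem conjL_conjL (s u : S) (c : ES S) : conjL s (conjL u c) = conjL (s * u) c := by
  apply Subtype.ext
  show s * (u * c.1 * u⁻¹) * s⁻¹ = (s * u) * c.1 * (s * u)⁻¹
  rw [InvSemigroup.mul_inv_rev]
  simp only [mul_assoc]

theorem conj_sle_iff (s : S) (c d : ES S) (hc : c.1 * (s⁻¹ * s) = c.1)
    (hd : d.1 * (s⁻¹ * s) = d.1) : sle c d ↔ sle (conjL s c) (conjL s d) := by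
  constructor
  · intro h
    have hv : c.1 = c.1 * d.1 := congrArg Subtype.val h
    apply Subtype.ext
    show s * c.1 * s⁻¹ = s * c.1 * s⁻¹ * (s * d.1 * s⁻¹)
    symm
    calc s * c.1 * s⁻¹ * (s * d.1 * s⁻¹) = s * (c.1 * (s⁻¹ * s)) * (d.1 * s⁻¹) := by
          simp only [mul_assoc]
      _ = s * c.1 * (d.1 * s⁻¹) := by rw [hc]
      _ = s * (c.1 * d.1) * s⁻¹ := by simp only [mul_assoc]
      _ = s * c.1 * s⁻¹ := by rw [← hv]
  · intro h
    have hv : s * c.1 * s⁻¹ = s * c.1 * s⁻¹ * (s * d.1 * s⁻¹) := congrArg Subtype.val h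
    apply Subtype.ext
    show c.1 = c.1 * d.1
    calc c.1 = s⁻¹ * (s * c.1 * s⁻¹) * s := (InvSemigroup.conj_conj s c.2 hc).symm
      _ = s⁻¹ * (s * c.1 * s⁻¹ * (s * d.1 * s⁻¹)) * s := by rw [← hv]
      _ = (s⁻¹ * (s * c.1 * s⁻¹) * s) * (d.1 * (s⁻¹ * s)) := by simp only [mul_assoc]
      _ = c.1 * (d.1 * (s⁻¹ * s)) := by rw [InvSemigroup.conj_conj s c.2 hc]
      _ = c.1 * d.1 := by rw [hd]

theorem A_act_self (A : SupportedAction X S) {x : X} {h : S} (hh : A.p x * h = A.p x) :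
    A.act x h = x := by
  calc A.act x h = A.act (A.act x (A.p x)) h := by rw [A.act_p]
    _ = A.act x (A.p x * h) := A.act_act _ _ _
    _ = A.act x (A.p x) := by rw [hh]
    _ = x := A.act_p x

variable (A : SupportedAction X S) (β : X ≃ X) (T : ES S ≃ ES S)

theorem bwd_sle_iff (HT : ∀ e f : ES S, T (e * f) = T e * T f) (a b : ES S) :
    sle (T a) (T b) ↔ sle a b := by
  constructor
  · intro h
    have h2 : T a = T (a * b) := by rw [HT]; exact h
    exact T.injective h2
  · intro h
    show T a = T a * T b
    rw [← HT, ← h]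

theorem bwd_p (Hp : ∀ x : X, P.p (β x) = T (A.toPresheaf.p x)) :
    ∀ x : X, P.p (β x) = T ⟨A.p x, A.p_idem x⟩ := Hp

theorem bwd_p' (Hp : ∀ x : X, P.p (β x) = T (A.toPresheaf.p x)) :
    ∀ y : X, P.p y = T ⟨A.p (β.symm y), A.p_idem _⟩ := by
  intro y
  have h := bwd_p A β T Hp (β.symm y)
  rwa [β.apply_symm_apply] at h

theorem bwd_act (Hβ : ∀ (x : X) (e : ES S), β (A.toPresheaf.act x e) = P.act (β x) (T e)) :
    ∀ (x : X) (e : ES S), β (A.act x e.1) = P.act (β x) (T e) := Hβ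

theorem bwd_sle_theta (HT : ∀ e f : ES S, T (e * f) = T e * T f) (a : ES S) (g : ES S) :
    sle a (T g) ↔ (T.symm a).1 * g.1 = (T.symm a).1 := by
  rw [← sle_ES_iff]
  constructor
  · intro h
    apply (bwd_sle_iff T HT _ _).mp
    rw [T.apply_symm_apply]; exact h
  · intro h
    have h2 := (bwd_sle_iff T HT _ _).mpr h
    rwa [T.apply_symm_apply] at h2

theorem bwd_le (HT : ∀ e f : ES S, T (e * f) = T e * T f)
    (Hp : ∀ x : X, P.p (β x) = T (A.toPresheaf.p x))
    (g : ES S) (x : X) (hx : sle (P.p x) (T g)) :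
    A.p (β.symm x) * g.1 = A.p (β.symm x) := by
  rw [bwd_p' A β T Hp x] at hx
  have h := (bwd_sle_theta T HT _ g).mp hx
  rwa [T.symm_apply_apply] at h

theorem bwd_mem_f (HT : ∀ e f : ES S, T (e * f) = T e * T f)
    (Hp : ∀ x : X, P.p (β x) = T (A.toPresheaf.p x)) (s : S) (x₀ : X) :
    sle (P.p (β (A.act x₀ s⁻¹))) (T ⟨s * s⁻¹, InvSemigroup.r_idem s⟩) := by
  have h1 : P.p (β (A.act x₀ s⁻¹)) = T (conjL s ⟨A.p x₀, A.p_idem x₀⟩) := by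
    rw [bwd_p A β T Hp]
    congr 1
    apply Subtype.ext
    show A.p (A.act x₀ s⁻¹) = s * A.p x₀ * s⁻¹
    rw [A.p_act, InvSemigroup.inv_inv]
  rw [h1]
  exact (bwd_sle_iff T HT _ _).mpr (Subtype.ext (InvSemigroup.conj_le s (A.p x₀)).symm)

theorem bwd_mem_e (HT : ∀ e f : ES S, T (e * f) = T e * T f)
    (Hp : ∀ x : X, P.p (β x) = T (A.toPresheaf.p x)) (s : S) (x₀ : X) :
    sle (P.p (β (A.act x₀ s))) (T ⟨s⁻¹ * s, InvSemigroup.d_idem s⟩) := by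
  have h1 : P.p (β (A.act x₀ s)) = T (conjR s ⟨A.p x₀, A.p_idem x₀⟩) := by
    rw [bwd_p A β T Hp]
    congr 1
    apply Subtype.ext
    show A.p (A.act x₀ s) = s⁻¹ * A.p x₀ * s
    rw [A.p_act]
  rw [h1]
  exact (bwd_sle_iff T HT _ _).mpr (Subtype.ext (InvSemigroup.conj_le' s (A.p x₀)).symm)

theorem bwd_xle (Hβ : ∀ (x : X) (e : ES S), β (A.toPresheaf.act x e) = P.act (β x) (T e))
    (Hp : ∀ x : X, P.p (β x) = T (A.toPresheaf.p x)) (z w : X) :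
    z = A.act w (A.p z) ↔ P.xle (β z) (β w) := by
  show _ ↔ β z = P.act (β w) (P.p (β z))
  rw [bwd_p A β T Hp z, ← bwd_act A β T Hβ w ⟨A.p z, A.p_idem z⟩]
  exact ⟨fun h => by rw [← h], fun h => β.injective h⟩

theorem bwd_ord (s : S) (x₀ y₀ : X) (hx : A.p x₀ * (s⁻¹ * s) = A.p x₀) :
    x₀ = A.act y₀ (A.p x₀) ↔
      A.act x₀ s⁻¹ = A.act (A.act y₀ s⁻¹) (A.p (A.act x₀ s⁻¹)) := by
  constructor
  · intro h
    rw [A.p_act, InvSemigroup.inv_inv, A.act_act]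
    have hc : s⁻¹ * (s * A.p x₀ * s⁻¹) = A.p x₀ * s⁻¹ := by
      calc s⁻¹ * (s * A.p x₀ * s⁻¹) = (s⁻¹ * s) * A.p x₀ * s⁻¹ := by simp only [mul_assoc]
        _ = A.p x₀ * (s⁻¹ * s) * s⁻¹ := by
            rw [InvSemigroup.idem_comm (InvSemigroup.d_idem s) (A.p_idem x₀)]
        _ = A.p x₀ * (s⁻¹ * s * s⁻¹) := by simp only [mul_assoc]
        _ = A.p x₀ * s⁻¹ := by rw [InvSemigroup.inv_mul_inv]
    rw [hc, ← A.act_act, ← h]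
  · intro h
    have h2 : A.act (A.act x₀ s⁻¹) s
        = A.act (A.act (A.act y₀ s⁻¹) (A.p (A.act x₀ s⁻¹))) s := by rw [← h]
    have hL : A.act (A.act x₀ s⁻¹) s = x₀ := by
      rw [A.act_act]; exact A_act_self A hx
    have hR : A.act (A.act (A.act y₀ s⁻¹) (A.p (A.act x₀ s⁻¹))) s = A.act y₀ (A.p x₀) := by
      rw [A.p_act, InvSemigroup.inv_inv, A.act_act, A.act_act]
      congr 1
      calc s⁻¹ * (s * A.p x₀ * s⁻¹ * s) = (s⁻¹ * s) * (A.p x₀ * (s⁻¹ * s)) := by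
            simp only [mul_assoc]
        _ = (s⁻¹ * s) * A.p x₀ := by rw [hx]
        _ = A.p x₀ * (s⁻¹ * s) := InvSemigroup.idem_comm (InvSemigroup.d_idem s) (A.p_idem x₀)
        _ = A.p x₀ := hx
    exact hL.symm.trans (h2.trans hR)

/-- The Munn element associated to `s ∈ S` by transporting the Munn representation
of the supported action along the isomorphism `(β, T)`. -/
def munnOf (HT : ∀ e f : ES S, T (e * f) = T e * T f)
    (Hβ : ∀ (x : X) (e : ES S), β (A.toPresheaf.act x e) = P.act (β x) (T e))
    (Hp : ∀ x : X, P.p (β x) = T (A.toPresheaf.p x)) (s : S) : MunnElt P where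
  e := T ⟨s⁻¹ * s, InvSemigroup.d_idem s⟩
  f := T ⟨s * s⁻¹, InvSemigroup.r_idem s⟩
  α :=
    { toFun := fun x => ⟨β (A.act (β.symm x.1) s⁻¹), bwd_mem_f A β T HT Hp s (β.symm x.1)⟩
      invFun := fun y => ⟨β (A.act (β.symm y.1) s), bwd_mem_e A β T HT Hp s (β.symm y.1)⟩
      left_inv := fun x => by
        apply Subtype.ext
        show β (A.act (β.symm (β (A.act (β.symm x.1) s⁻¹))) s) = x.1
        rw [β.symm_apply_apply, A.act_act]
        have hle := bwd_le A β T HT Hp ⟨s⁻¹ * s, InvSemigroup.d_idem s⟩ x.1 x.2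
        rw [A_act_self A hle, β.apply_symm_apply]
      right_inv := fun y => by
        apply Subtype.ext
        show β (A.act (β.symm (β (A.act (β.symm y.1) s))) s⁻¹) = y.1
        rw [β.symm_apply_apply, A.act_act]
        have hle := bwd_le A β T HT Hp ⟨s * s⁻¹, InvSemigroup.r_idem s⟩ y.1 y.2
        rw [A_act_self A hle, β.apply_symm_apply] }
  θ :=
    { toFun := fun a => ⟨T (conjL s (T.symm a.1)),
        (bwd_sle_iff T HT _ _).mpr
          (Subtype.ext (InvSemigroup.conj_le s (T.symm a.1).1).symm)⟩
      invFun := fun b => ⟨T (conjR s (T.symm b.1)),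
        (bwd_sle_iff T HT _ _).mpr
          (Subtype.ext (InvSemigroup.conj_le' s (T.symm b.1).1).symm)⟩
      left_inv := fun a => by
        apply Subtype.ext
        show T (conjR s (T.symm (T (conjL s (T.symm a.1))))) = a.1
        rw [T.symm_apply_apply]
        have hc : (T.symm a.1).1 * (s⁻¹ * s) = (T.symm a.1).1 := by
          have h2 : sle (T (T.symm a.1)) (T ⟨s⁻¹ * s, InvSemigroup.d_idem s⟩) := by
            rw [T.apply_symm_apply]; exact a.2
          have h3 := (bwd_sle_iff T HT _ _).mp h2
          exact (congrArg Subtype.val h3).symm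
        have h4 : conjR s (conjL s (T.symm a.1)) = T.symm a.1 := by
          apply Subtype.ext
          show s⁻¹ * (s * (T.symm a.1).1 * s⁻¹) * s = (T.symm a.1).1
          exact InvSemigroup.conj_conj s (T.symm a.1).2 hc
        rw [h4, T.apply_symm_apply]
      right_inv := fun b => by
        apply Subtype.ext
        show T (conjL s (T.symm (T (conjR s (T.symm b.1))))) = b.1
        rw [T.symm_apply_apply]
        have hc : (T.symm b.1).1 * (s * s⁻¹) = (T.symm b.1).1 := by
          have h2 : sle (T (T.symm b.1)) (T ⟨s * s⁻¹, InvSemigroup.r_idem s⟩) := by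
            rw [T.apply_symm_apply]; exact b.2
          have h3 := (bwd_sle_iff T HT _ _).mp h2
          exact (congrArg Subtype.val h3).symm
        have h4 : conjL s (conjR s (T.symm b.1)) = T.symm b.1 := by
          apply Subtype.ext
          show s * (s⁻¹ * (T.symm b.1).1 * s) * s⁻¹ = (T.symm b.1).1
          exact InvSemigroup.conj_conj' s (T.symm b.1).2 hc
        rw [h4, T.apply_symm_apply] }
  α_ord := fun x y => by
    have h1 : P.xle x.1 y.1 ↔ β.symm x.1 = A.act (β.symm y.1) (A.p (β.symm x.1)) := by
      have h := bwd_xle A β T Hβ Hp (β.symm x.1) (β.symm y.1)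
      rw [β.apply_symm_apply, β.apply_symm_apply] at h
      exact h.symm
    have hx : A.p (β.symm x.1) * (s⁻¹ * s) = A.p (β.symm x.1) :=
      bwd_le A β T HT Hp ⟨s⁻¹ * s, InvSemigroup.d_idem s⟩ x.1 x.2
    have h2 := bwd_ord A s (β.symm x.1) (β.symm y.1) hx
    have h3 : A.act (β.symm x.1) s⁻¹
          = A.act (A.act (β.symm y.1) s⁻¹) (A.p (A.act (β.symm x.1) s⁻¹)) ↔
        P.xle (β (A.act (β.symm x.1) s⁻¹)) (β (A.act (β.symm y.1) s⁻¹)) :=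
      bwd_xle A β T Hβ Hp _ _
    exact h1.trans (h2.trans h3)
  θ_ord := fun a b => by
    have ha : (T.symm a.1).1 * (s⁻¹ * s) = (T.symm a.1).1 := by
      have h2 : sle (T (T.symm a.1)) (T ⟨s⁻¹ * s, InvSemigroup.d_idem s⟩) := by
        rw [T.apply_symm_apply]; exact a.2
      exact (congrArg Subtype.val ((bwd_sle_iff T HT _ _).mp h2)).symm
    have hb : (T.symm b.1).1 * (s⁻¹ * s) = (T.symm b.1).1 := by
      have h2 : sle (T (T.symm b.1)) (T ⟨s⁻¹ * s, InvSemigroup.d_idem s⟩) := by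
        rw [T.apply_symm_apply]; exact b.2
      exact (congrArg Subtype.val ((bwd_sle_iff T HT _ _).mp h2)).symm
    have h1 : sle a.1 b.1 ↔ sle (T.symm a.1) (T.symm b.1) := by
      constructor
      · intro h
        apply (bwd_sle_iff T HT _ _).mp
        rw [T.apply_symm_apply, T.apply_symm_apply]; exact h
      · intro h
        have h2 := (bwd_sle_iff T HT _ _).mpr h
        rwa [T.apply_symm_apply, T.apply_symm_apply] at h2
    exact h1.trans ((conj_sle_iff s _ _ ha hb).trans (bwd_sle_iff T HT _ _).symm)
  compat := fun x => by
    have h1 : P.p (β (A.act (β.symm x.1) s⁻¹))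
        = T (conjL s ⟨A.p (β.symm x.1), A.p_idem _⟩) := by
      rw [bwd_p A β T Hp]
      congr 1
      apply Subtype.ext
      show A.p (A.act (β.symm x.1) s⁻¹) = s * A.p (β.symm x.1) * s⁻¹
      rw [A.p_act, InvSemigroup.inv_inv]
    have h2 : T.symm (P.p x.1) = ⟨A.p (β.symm x.1), A.p_idem _⟩ := by
      rw [bwd_p' A β T Hp x.1, T.symm_apply_apply]
    show P.p (β (A.act (β.symm x.1) s⁻¹)) = T (conjL s (T.symm (P.p x.1)))
    rw [h1, h2]

end BackwardAux
section BackwardAux2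

variable {X S : Type*} [InvSemigroup S] {P : SPresheaf X (ES S)}
variable (A : SupportedAction X S) (β : X ≃ X) (T : ES S ≃ ES S)
variable (HT : ∀ e f : ES S, T (e * f) = T e * T f)
variable (Hβ : ∀ (x : X) (e : ES S), β (A.toPresheaf.act x e) = P.act (β x) (T e))
variable (Hp : ∀ x : X, P.p (β x) = T (A.toPresheaf.p x))

theorem munnOf_maps (HT : ∀ e f : ES S, T (e * f) = T e * T f)
    (Hβ : ∀ (x : X) (e : ES S), β (A.toPresheaf.act x e) = P.act (β x) (T e))
    (Hp : ∀ x : X, P.p (β x) = T (A.toPresheaf.p x)) (s : S) (x y : X) :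
    (munnOf A β T HT Hβ Hp s).maps x y ↔
      sle (P.p x) (T ⟨s⁻¹ * s, InvSemigroup.d_idem s⟩) ∧ y = β (A.act (β.symm x) s⁻¹) := by
  constructor
  · rintro ⟨h, rfl⟩; exact ⟨h, rfl⟩
  · rintro ⟨h, rfl⟩; exact ⟨h, rfl⟩

theorem munnOf_mapsE (HT : ∀ e f : ES S, T (e * f) = T e * T f)
    (Hβ : ∀ (x : X) (e : ES S), β (A.toPresheaf.act x e) = P.act (β x) (T e))
    (Hp : ∀ x : X, P.p (β x) = T (A.toPresheaf.p x)) (s : S) (a b : ES S) :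
    (munnOf A β T HT Hβ Hp s).mapsE a b ↔
      sle a (T ⟨s⁻¹ * s, InvSemigroup.d_idem s⟩) ∧ b = T (conjL s (T.symm a)) := by
  constructor
  · rintro ⟨h, rfl⟩; exact ⟨h, rfl⟩
  · rintro ⟨h, rfl⟩; exact ⟨h, rfl⟩

theorem bwd_dom_iff (HT : ∀ e f : ES S, T (e * f) = T e * T f) (s u : S) (a : ES S) :
    sle a (T ⟨(s * u)⁻¹ * (s * u), InvSemigroup.d_idem _⟩) ↔
      (sle a (T ⟨u⁻¹ * u, InvSemigroup.d_idem u⟩) ∧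
        sle (T (conjL u (T.symm a))) (T ⟨s⁻¹ * s, InvSemigroup.d_idem s⟩)) := by
  rw [bwd_sle_theta T HT, bwd_sle_theta T HT, bwd_sle_theta T HT, T.symm_apply_apply]
  show (T.symm a).1 * ((s * u)⁻¹ * (s * u)) = (T.symm a).1 ↔ _
  rw [InvSemigroup.mul_inv_rev]
  exact InvSemigroup.dom_iff s u (T.symm a).2

theorem bwd_p_actinv (Hp : ∀ x : X, P.p (β x) = T (A.toPresheaf.p x)) (s : S) (x : X) :
    P.p (β (A.act (β.symm x) s⁻¹)) = T (conjL s (T.symm (P.p x))) := by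
  rw [bwd_p' A β T Hp x, T.symm_apply_apply, bwd_p A β T Hp]
  congr 1
  apply Subtype.ext
  show A.p (A.act (β.symm x) s⁻¹) = s * A.p (β.symm x) * s⁻¹
  rw [A.p_act, InvSemigroup.inv_inv]

theorem bwd_val (s u : S) (x : X) :
    β (A.act (β.symm (β (A.act (β.symm x) u⁻¹))) s⁻¹) = β (A.act (β.symm x) (s * u)⁻¹) := by
  rw [β.symm_apply_apply, A.act_act, InvSemigroup.mul_inv_rev]

variable {mul : MunnElt P → MunnElt P → MunnElt P}

theorem bwd_hom (hmul : IsMunnMul mul) (s u : S) :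
    munnOf A β T HT Hβ Hp (s * u)
      = mul (munnOf A β T HT Hβ Hp s) (munnOf A β T HT Hβ Hp u) := by
  apply MunnElt.ext_of_graphs
  · intro a b
    rw [munnOf_mapsE, (hmul _ _).2]
    constructor
    · rintro ⟨ha, rfl⟩
      obtain ⟨h1, h2⟩ := (bwd_dom_iff T HT s u a).mp ha
      refine ⟨T (conjL u (T.symm a)), ?_, ?_⟩
      · rw [munnOf_mapsE]; exact ⟨h1, rfl⟩
      · rw [munnOf_mapsE]
        refine ⟨h2, ?_⟩
        rw [T.symm_apply_apply, conjL_conjL]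
    · rintro ⟨m, hm, hb⟩
      rw [munnOf_mapsE] at hm hb
      obtain ⟨h1, rfl⟩ := hm
      obtain ⟨h2, rfl⟩ := hb
      refine ⟨(bwd_dom_iff T HT s u a).mpr ⟨h1, h2⟩, ?_⟩
      rw [T.symm_apply_apply, conjL_conjL]
  · intro x z
    rw [munnOf_maps, (hmul _ _).1]
    constructor
    · rintro ⟨hx, rfl⟩
      obtain ⟨h1, h2⟩ := (bwd_dom_iff T HT s u (P.p x)).mp hx
      refine ⟨β (A.act (β.symm x) u⁻¹), ?_, ?_⟩
      · rw [munnOf_maps]; exact ⟨h1, rfl⟩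
      · rw [munnOf_maps]
        refine ⟨?_, ?_⟩
        · rw [bwd_p_actinv A β T Hp u x]
          exact h2
        · exact (bwd_val A β s u x).symm
    · rintro ⟨y, hy, hz⟩
      rw [munnOf_maps] at hy hz
      obtain ⟨h1, rfl⟩ := hy
      obtain ⟨h2, rfl⟩ := hz
      rw [bwd_p_actinv A β T Hp u x] at h2
      exact ⟨(bwd_dom_iff T HT s u (P.p x)).mpr ⟨h1, h2⟩, bwd_val A β s u x⟩

theorem bwd_sep (s t : S) (hs : s * s = s) (ht : t * t = t)
    (h : munnOf A β T HT Hβ Hp s = munnOf A β T HT Hβ Hp t) : s = t := by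
  have h2 := congrArg MunnElt.e h
  have h3 := T.injective h2
  have h4 := congrArg Subtype.val h3
  have h5 : s⁻¹ * s = t⁻¹ * t := h4
  rw [InvSemigroup.idem_inv hs, InvSemigroup.idem_inv ht, hs, ht] at h5
  exact h5

theorem bwd_wide (hmul : IsMunnMul mul) (t : MunnElt P) (ht : mul t t = t) :
    munnOf A β T HT Hβ Hp (T.symm t.e).1 = t := by
  have hteq := idem_eq_idElt hmul ht
  have hgraphE : ∀ a b, t.mapsE a b ↔ sle a t.e ∧ a = b := by
    intro a b; rw [hteq]; exact MunnElt.idElt_mapsE t.e a b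
  have hgraphM : ∀ x y, t.maps x y ↔ sle (P.p x) t.e ∧ x = y := by
    intro x y; rw [hteq]; exact MunnElt.idElt_maps t.e x y
  have hss : (T.symm t.e).1 * (T.symm t.e).1 = (T.symm t.e).1 := (T.symm t.e).2
  have hsinv : (T.symm t.e).1⁻¹ = (T.symm t.e).1 := InvSemigroup.idem_inv hss
  have hes : (⟨(T.symm t.e).1⁻¹ * (T.symm t.e).1, InvSemigroup.d_idem _⟩ : ES S)
      = T.symm t.e := Subtype.ext (by
        show (T.symm t.e).1⁻¹ * (T.symm t.e).1 = (T.symm t.e).1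
        rw [hsinv, hss])
  have hTes : T ⟨(T.symm t.e).1⁻¹ * (T.symm t.e).1, InvSemigroup.d_idem _⟩ = t.e := by
    rw [hes, T.apply_symm_apply]
  apply MunnElt.ext_of_graphs
  · intro a b
    rw [munnOf_mapsE, hgraphE, hTes]
    have hval : ∀ _ : sle a t.e, T (conjL (T.symm t.e).1 (T.symm a)) = a := by
      intro h1
      have hc : (T.symm a).1 * (T.symm t.e).1 = (T.symm a).1 := by
        exact (bwd_sle_theta T HT a (T.symm t.e)).mp
          (by rw [T.apply_symm_apply]; exact h1)
      have hconj : conjL (T.symm t.e).1 (T.symm a) = T.symm a := by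
        apply Subtype.ext
        show (T.symm t.e).1 * (T.symm a).1 * (T.symm t.e).1⁻¹ = (T.symm a).1
        rw [hsinv]
        calc (T.symm t.e).1 * (T.symm a).1 * (T.symm t.e).1
            = (T.symm a).1 * (T.symm t.e).1 * (T.symm t.e).1 := by
              rw [InvSemigroup.idem_comm hss (T.symm a).2]
          _ = (T.symm a).1 * ((T.symm t.e).1 * (T.symm t.e).1) := mul_assoc _ _ _
          _ = (T.symm a).1 * (T.symm t.e).1 := by rw [hss]
          _ = (T.symm a).1 := hc
      rw [hconj, T.apply_symm_apply]
    constructor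
    · rintro ⟨h1, rfl⟩
      exact ⟨h1, (hval h1).symm⟩
    · rintro ⟨h1, rfl⟩
      exact ⟨h1, (hval h1).symm⟩
  · intro x y
    rw [munnOf_maps, hgraphM, hTes]
    have hval : ∀ _ : sle (P.p x) t.e, β (A.act (β.symm x) (T.symm t.e).1⁻¹) = x := by
      intro h1
      rw [hsinv]
      have h2 := bwd_act A β T Hβ (β.symm x) (T.symm t.e)
      rw [β.apply_symm_apply, T.apply_symm_apply] at h2
      rw [h2]
      exact P.act_self h1
    constructor
    · rintro ⟨h1, rfl⟩
      exact ⟨h1, (hval h1).symm⟩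
    · rintro ⟨h1, rfl⟩
      exact ⟨h1, (hval h1).symm⟩

end BackwardAux2
/-- for an inverse semigroup `S` and a presheaf `(X, E(S), p)`, there exists
an idempotent-separating homomorphism `φ : S → T_X` whose image is a wide inverse
subsemigroup of `T_X` if and only if there exists a supported action `(X, S, p̄)` whose
restriction to the idempotents is isomorphic to `(X, E(S), p)`. -/
theorem representation_iff_action {X S : Type*} [InvSemigroup S] (P : SPresheaf X (ES S))
    (mul : MunnElt P → MunnElt P → MunnElt P) (hmul : IsMunnMul mul) :
    (∃ φ : S → MunnElt P,
      (∀ s t : S, φ (s * t) = mul (φ s) (φ t)) ∧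
      (∀ e f : S, e * e = e → f * f = f → φ e = φ f → e = f) ∧
      (∀ t : MunnElt P, mul t t = t → ∃ s : S, φ s = t)) ↔
    (∃ (A : SupportedAction X S) (α : X ≃ X) (θ : ES S ≃ ES S),
      (∀ e f : ES S, θ (e * f) = θ e * θ f) ∧
      (∀ (x : X) (e : ES S), α (A.toPresheaf.act x e) = P.act (α x) (θ e)) ∧
      (∀ x : X, P.p (α x) = θ (A.toPresheaf.p x))) := by
  constructor
  · rintro ⟨φ, hhom, hsep, hwide⟩
    have hθinj : Function.Injective (theta0 φ) := by
      intro e f h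
      exact Subtype.ext (hsep e.1 f.1 e.2 f.2
        (by rw [fwd_idem hmul φ hhom e, fwd_idem hmul φ hhom f, h]))
    have hθsurj : Function.Surjective (theta0 φ) := by
      intro g
      have hid : mul (MunnElt.idElt P g) (MunnElt.idElt P g) = MunnElt.idElt P g := by
        rw [mul_idElt hmul, MeetSL.idem]
      obtain ⟨s, hs⟩ := hwide _ hid
      refine ⟨⟨s⁻¹ * s, InvSemigroup.d_idem s⟩, ?_⟩
      show (φ (s⁻¹ * s)).e = g
      rw [hhom, fwd_inv hmul φ hhom, mul_invElt_left hmul, hs]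
      rfl
    set θE : ES S ≃ ES S := Equiv.ofBijective (theta0 φ) ⟨hθinj, hθsurj⟩ with hθE
    have hθapp : ∀ e, θE e = theta0 φ e := fun e => rfl
    have hθsymm : ∀ g, theta0 φ (θE.symm g) = g := fun g => θE.apply_symm_apply g
    have hθsymm' : ∀ e, θE.symm (theta0 φ e) = e := fun e => θE.symm_apply_apply e
    refine ⟨⟨fun x s => actF φ x s, fun x => (θE.symm (P.p x)).1,
      fun x => (θE.symm (P.p x)).2, ?_, ?_, ?_⟩, Equiv.refl X, θE, ?_, ?_, ?_⟩
    · -- act_act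
      exact fun x s u => fwd_act_act hmul φ hhom x s u
    · -- act_p
      intro x
      show actF φ x (θE.symm (P.p x)).1 = x
      rw [fwd_act_idem hmul φ hhom x (θE.symm (P.p x)), hθsymm, P.act_p]
    · -- p_act
      intro x s
      show (θE.symm (P.p (actF φ x s))).1 = s⁻¹ * (θE.symm (P.p x)).1 * s
      have hkey := fwd_key hmul φ hhom s (θE.symm (P.p x))
      have h6 : (φ s).θ ⟨theta0 φ (conjR s (θE.symm (P.p x))),
          fwd_key_le hmul φ hhom s (θE.symm (P.p x))⟩
          = ⟨theta0 φ (θE.symm (P.p x)) * (φ s).f, sle_mul_right _ _⟩ :=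
        Subtype.ext hkey
      have h7 := congrArg (φ s).θ.symm h6
      rw [Equiv.symm_apply_apply] at h7
      have h8 := congrArg Subtype.val h7
      have h12 : ((φ s).θ.symm ⟨P.p x * (φ s).f, sle_mul_right _ _⟩).1
          = ((φ s).θ.symm ⟨theta0 φ (θE.symm (P.p x)) * (φ s).f, sle_mul_right _ _⟩).1 :=
        (φ s).theta_symm_congr (by rw [hθsymm])
      have h9 : P.p (actF φ x s) = theta0 φ (conjR s (θE.symm (P.p x))) := by
        rw [fwd_p_act hmul φ hhom x s, h12]
        exact h8.symm
      rw [h9]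
      have h10 : θE.symm (theta0 φ (conjR s (θE.symm (P.p x))))
          = conjR s (θE.symm (P.p x)) := hθsymm' _
      rw [h10]
      rfl
    · -- θ multiplicative
      exact fun e f => fwd_theta0_mul hmul φ hhom e f
    · -- action compatible
      intro x e
      show actF φ x e.1 = P.act x (θE e)
      exact fwd_act_idem hmul φ hhom x e
    · -- p compatible
      intro x
      show P.p x = θE (θE.symm (P.p x))
      exact (θE.apply_symm_apply (P.p x)).symm
  · rintro ⟨A, β, T, HT, Hβ, Hp⟩
    refine ⟨fun s => munnOf A β T HT Hβ Hp s, ?_, ?_, ?_⟩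
    · exact fun s u => bwd_hom A β T HT Hβ Hp hmul s u
    · exact fun e f he hf h => bwd_sep A β T HT Hβ Hp e f he hf h
    · intro t ht
      exact ⟨(T.symm t.e).1, bwd_wide A β T HT Hβ Hp hmul t ht⟩
end

section
/- Let X be a sober topological space. Then the inverse semigroup I(X,τ) of homeomorphisms between open subsets of X is fundamental: if s, t ∈ I(X,τ) satisfy s⁻¹ e s = t⁻¹ e t for every idempotent e of I(X,τ), then s = t. -/
/-- A partial homeomorphism of a topological space: a homeomorphism between open
subsets (an element of the inverse semigroup `I(X, τ)`). -/
structure PHomeo (X : Type*) [TopologicalSpace X] where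
  src : Set X
  tgt : Set X
  src_open : IsOpen src
  tgt_open : IsOpen tgt
  toHomeomorph : ↥src ≃ₜ ↥tgt

/-- The graph of a partial homeomorphism. -/
def PHomeo.maps {X : Type*} [TopologicalSpace X] (t : PHomeo X) (x y : X) : Prop :=
  ∃ h : x ∈ t.src, (t.toHomeomorph ⟨x, h⟩).1 = y

/-- `mul` is the multiplication of `I(X, τ)`: the product `mul a b` is the composition
"apply `b` first, then `a`", restricted to the largest open set on which it is defined. -/
def IsPHMul {X : Type*} [TopologicalSpace X] (mul : PHomeo X → PHomeo X → PHomeo X) : Prop :=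
  ∀ a b : PHomeo X, ∀ x z : X,
    (mul a b).maps x z ↔ ∃ y, b.maps x y ∧ a.maps y z

/-- `inv` is the inversion of `I(X, τ)`. -/
def IsPHInv {X : Type*} [TopologicalSpace X] (inv : PHomeo X → PHomeo X) : Prop :=
  ∀ t : PHomeo X, ∀ x y : X, (inv t).maps x y ↔ t.maps y x

lemma PHomeo.maps_fun {X : Type*} [TopologicalSpace X] {a : PHomeo X} {x y z : X}
    (h1 : a.maps x y) (h2 : a.maps x z) : y = z := by
  obtain ⟨hx, rfl⟩ := h1
  obtain ⟨hx', rfl⟩ := h2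
  rfl

lemma PHomeo.mem_src_iff {X : Type*} [TopologicalSpace X] (a : PHomeo X) (x : X) :
    x ∈ a.src ↔ ∃ y, a.maps x y :=
  ⟨fun hx => ⟨_, hx, rfl⟩, fun ⟨_, hy, _⟩ => hy⟩

lemma PHomeo.mem_tgt_iff {X : Type*} [TopologicalSpace X] (a : PHomeo X) (z : X) :
    z ∈ a.tgt ↔ ∃ x, a.maps x z := by
  constructor
  · intro hz
    refine ⟨(a.toHomeomorph.symm ⟨z, hz⟩).1, (a.toHomeomorph.symm ⟨z, hz⟩).2, ?_⟩
    simp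
  · rintro ⟨x, hx, rfl⟩
    exact (a.toHomeomorph ⟨x, hx⟩).2

lemma PHomeo.ext' {X : Type*} [TopologicalSpace X] {a b : PHomeo X}
    (h : ∀ x y, a.maps x y ↔ b.maps x y) : a = b := by
  have hsrc : a.src = b.src := by
    ext x; rw [a.mem_src_iff, b.mem_src_iff]
    exact exists_congr fun y => h x y
  have htgt : a.tgt = b.tgt := by
    ext z; rw [a.mem_tgt_iff, b.mem_tgt_iff]
    exact exists_congr fun x => h x z
  obtain ⟨sa, ta, oa, oa', fa⟩ := a
  obtain ⟨sb, tb, ob, ob', fb⟩ := b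
  simp only at hsrc htgt
  subst hsrc; subst htgt
  simp only [mk.injEq, heq_eq_eq, true_and]
  ext x
  have h1 : PHomeo.maps ⟨sa, ta, oa, oa', fa⟩ x.1 (fa x).1 := ⟨x.2, rfl⟩
  obtain ⟨hx, heq⟩ := (h x.1 (fa x).1).mp h1
  have : (⟨x.1, hx⟩ : ↥sa) = x := rfl
  rw [this] at heq
  exact heq.symm

/-- The partial identity on an open set, as a `PHomeo`. -/
def idP {X : Type*} [TopologicalSpace X] (U : Set X) (hU : IsOpen U) : PHomeo X :=
  ⟨U, U, hU, hU, Homeomorph.refl _⟩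

lemma idP_maps {X : Type*} [TopologicalSpace X] (U : Set X) (hU : IsOpen U) (x y : X) :
    (idP U hU).maps x y ↔ x ∈ U ∧ y = x := by
  constructor
  · rintro ⟨hx, rfl⟩; exact ⟨hx, rfl⟩
  · rintro ⟨hx, rfl⟩; exact ⟨hx, rfl⟩

/-- for a sober space `X` the inverse semigroup `I(X, τ)` of homeomorphisms
between open subsets is fundamental: if `s⁻¹ e s = t⁻¹ e t` for every idempotent `e`, then
`s = t`. -/
theorem partial_homeos_fundamental {X : Type*} [TopologicalSpace X] [QuasiSober X]
    [T0Space X]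
    (mul : PHomeo X → PHomeo X → PHomeo X) (hmul : IsPHMul mul)
    (inv : PHomeo X → PHomeo X) (hinv : IsPHInv inv)
    (s t : PHomeo X)
    (h : ∀ e : PHomeo X, mul e e = e → mul (mul (inv s) e) s = mul (mul (inv t) e) t) :
    s = t := by
  -- partial identities are idempotent
  have hid : ∀ (U : Set X) (hU : IsOpen U), mul (idP U hU) (idP U hU) = idP U hU := by
    intro U hU
    apply PHomeo.ext'
    intro x y
    rw [hmul, idP_maps]
    constructor
    · rintro ⟨w, hw1, hw2⟩
      rw [idP_maps] at hw1 hw2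
      obtain ⟨hx, rfl⟩ := hw1
      exact ⟨hx, hw2.2⟩
    · rintro ⟨hx, rfl⟩
      exact ⟨_, (idP_maps U hU _ _).mpr ⟨hx, rfl⟩, (idP_maps U hU _ _).mpr ⟨hx, rfl⟩⟩
  -- graph of `s⁻¹ ∘ id_U ∘ s`
  have conj : ∀ (r : PHomeo X) (U : Set X) (hU : IsOpen U) (x : X),
      (mul (mul (inv r) (idP U hU)) r).maps x x ↔ ∃ y, r.maps x y ∧ y ∈ U := by
    intro r U hU x
    rw [hmul]
    constructor
    · rintro ⟨y, hy, hz⟩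
      rw [hmul] at hz
      obtain ⟨w, hw1, hw2⟩ := hz
      rw [idP_maps] at hw1
      obtain ⟨hyU, rfl⟩ := hw1
      exact ⟨_, hy, hyU⟩
    · rintro ⟨y, hy, hyU⟩
      refine ⟨y, hy, ?_⟩
      rw [hmul]
      exact ⟨y, (idP_maps U hU _ _).mpr ⟨hyU, rfl⟩, (hinv r y x).mpr hy⟩
  have key : ∀ (U : Set X) (hU : IsOpen U) (x : X),
      (∃ y, s.maps x y ∧ y ∈ U) ↔ (∃ y, t.maps x y ∧ y ∈ U) := by
    intro U hU x
    rw [← conj s U hU x, ← conj t U hU x, h (idP U hU) (hid U hU)]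
  -- same sources
  have hsrc : ∀ x, x ∈ s.src ↔ x ∈ t.src := by
    intro x
    rw [s.mem_src_iff, t.mem_src_iff]
    have := key Set.univ isOpen_univ x
    simpa using this
  -- same values
  have hval : ∀ x y y', s.maps x y → t.maps x y' → y = y' := by
    intro x y y' hy hy'
    have hins : ∀ U : Set X, IsOpen U → (y ∈ U ↔ y' ∈ U) := by
      intro U hU
      constructor
      · intro hyU
        obtain ⟨w, hw, hwU⟩ := (key U hU x).mp ⟨y, hy, hyU⟩
        rwa [PHomeo.maps_fun hy' hw]
      · intro hyU
        obtain ⟨w, hw, hwU⟩ := (key U hU x).mpr ⟨y', hy', hyU⟩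
        rwa [PHomeo.maps_fun hy hw]
    exact ((inseparable_iff_forall_isOpen).mpr hins).eq
  apply PHomeo.ext'
  intro x y
  constructor
  · intro hxy
    have hx : x ∈ t.src := (hsrc x).mp ((s.mem_src_iff x).mpr ⟨y, hxy⟩)
    obtain ⟨y', hy'⟩ := (t.mem_src_iff x).mp hx
    rwa [← hval x y y' hxy hy'] at hy'
  · intro hxy
    have hx : x ∈ s.src := (hsrc x).mpr ((t.mem_src_iff x).mpr ⟨y, hxy⟩)
    obtain ⟨y', hy'⟩ := (s.mem_src_iff x).mp hx
    rwa [hval x y' y hy' hxy] at hy'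
end

section
/- Let X and Y be sober topological spaces such that the inverse semigroups I(X,τ) and I(Y,τ) are isomorphic. Then X and Y are homeomorphic. -/
/-!
The idempotents of `I(X, τ)` are exactly the identities of open sets, and `e ≤ f :⟺ e f = e`
orders them by inclusion. A semigroup isomorphism preserves idempotents and this order, so it
induces an order isomorphism `Opens X ≃o Opens Y`. In a sober space the points correspond to the
prime elements of `Opens X` via `x ↦ (closure {x})ᶜ`, and `x ∈ V ↔ ¬V ≤ (closure {x})ᶜ`;
hence the order isomorphism yields a bijection of points that is continuous in both directions.
-/

open TopologicalSpace Set Function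

theorem OrderIso.infPrime_apply {α β : Type*} [SemilatticeInf α] [SemilatticeInf β]
    (J : α ≃o β) {a : α} : InfPrime (J a) ↔ InfPrime a := by
  simp only [InfPrime, J.isMax_apply, J.surjective.forall, ← J.map_inf, J.le_iff_le]

namespace TopologicalSpace.Opens

variable {X : Type*} [TopologicalSpace X]

def primeOpen (x : X) : Opens X := ⟨(closure {x})ᶜ, isClosed_closure.isOpen_compl⟩

theorem mem_iff_not_le_primeOpen {x : X} {V : Opens X} : x ∈ V ↔ ¬V ≤ primeOpen x := by
  change x ∈ (V : Set X) ↔ ¬(V : Set X) ⊆ (closure {x})ᶜ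
  rw [← inter_compl_nonempty_iff, _root_.compl_compl, inter_comm,
    closure_inter_open_nonempty_iff V.isOpen, singleton_inter_nonempty]

theorem infPrime_iff_isIrreducible_compl {U : Opens X} :
    InfPrime U ↔ IsIrreducible ((U : Set X)ᶜ) := by
  have meets : ∀ u : Set X, ((U : Set X)ᶜ ∩ u).Nonempty ↔ ¬u ⊆ U := fun u => by
    rw [inter_comm, inter_compl_nonempty_iff]
  have hmax : IsMax U ↔ ¬((U : Set X)ᶜ).Nonempty := by
    rw [isMax_iff_eq_top, not_nonempty_iff_eq_empty, compl_empty_iff, ← coe_top,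
      SetLike.coe_set_eq]
  simp only [InfPrime, IsIrreducible, IsPreirreducible, hmax, not_not, meets]
  refine and_congr Iff.rfl ⟨fun h u v hu hv hUu hUv hle => ?_, fun h V W hle => ?_⟩
  · exact (h (b := ⟨u, hu⟩) (c := ⟨v, hv⟩) hle).elim hUu hUv
  · by_contra! hVW
    exact h V W V.isOpen W.isOpen hVW.1 hVW.2 hle

theorem infPrime_primeOpen (x : X) : InfPrime (primeOpen x) := by
  rw [infPrime_iff_isIrreducible_compl]
  simpa [primeOpen] using isIrreducible_singleton.closure

theorem primeOpen_injective [T0Space X] : Injective (primeOpen (X := X)) := fun _ _ h =>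
  (inseparable_iff_closure_eq.2 (compl_inj_iff.1 (congrArg SetLike.coe h))).eq

theorem exists_primeOpen_eq [QuasiSober X] {U : Opens X} (hU : InfPrime U) :
    ∃ x, primeOpen x = U := by
  have hirr := infPrime_iff_isIrreducible_compl.1 hU
  refine ⟨hirr.genericPoint, SetLike.coe_injective ?_⟩
  simp [primeOpen, (hirr.isGenericPoint_genericPoint U.isOpen.isClosed_compl).def]

noncomputable def pointEquivInfPrime [QuasiSober X] [T0Space X] :
    X ≃ {U : Opens X // InfPrime U} :=
  Equiv.ofBijective (fun x => ⟨primeOpen x, infPrime_primeOpen x⟩)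
    ⟨fun _ _ h => primeOpen_injective (congrArg Subtype.val h),
     fun U => (exists_primeOpen_eq U.2).imp fun _ hx => Subtype.ext hx⟩

variable {Y : Type*} [TopologicalSpace Y]

theorem apply_mem_iff_of_primeOpen_apply (J : Opens X ≃o Opens Y) {f : X → Y}
    (hf : ∀ x, primeOpen (f x) = J (primeOpen x)) {x : X} {V : Opens Y} :
    f x ∈ V ↔ x ∈ J.symm V := by
  rw [mem_iff_not_le_primeOpen, mem_iff_not_le_primeOpen, hf, ← J.symm_apply_le]

theorem continuous_of_primeOpen_apply (J : Opens X ≃o Opens Y) {f : X → Y}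
    (hf : ∀ x, primeOpen (f x) = J (primeOpen x)) : Continuous f := by
  refine continuous_def.2 fun s hs => ?_
  convert (J.symm ⟨s, hs⟩).isOpen using 1
  ext x
  exact apply_mem_iff_of_primeOpen_apply J hf (V := ⟨s, hs⟩)

end TopologicalSpace.Opens

open TopologicalSpace.Opens in
noncomputable def Homeomorph.ofOpensOrderIso {X Y : Type*} [TopologicalSpace X]
    [TopologicalSpace Y] [QuasiSober X] [T0Space X] [QuasiSober Y] [T0Space Y]
    (J : Opens X ≃o Opens Y) : X ≃ₜ Y :=
  let e : X ≃ Y := pointEquivInfPrime.trans <|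
    (J.toEquiv.subtypeEquiv fun _ => J.infPrime_apply.symm).trans pointEquivInfPrime.symm
  have he : ∀ x, primeOpen (e x) = J (primeOpen x) := fun x =>
    congrArg Subtype.val (pointEquivInfPrime.apply_symm_apply _)
  { e with
    continuous_toFun := continuous_of_primeOpen_apply J he
    continuous_invFun := continuous_of_primeOpen_apply J.symm fun y => by
      change primeOpen (e.symm y) = _
      rw [J.eq_symm_apply, ← he, e.apply_symm_apply] }

namespace PHomeo

variable {X : Type*} [TopologicalSpace X]

theorem maps_right_unique {t : PHomeo X} {x y z : X} (hy : t.maps x y) (hz : t.maps x z) :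
    y = z := by
  obtain ⟨_, rfl⟩ := hy
  obtain ⟨_, rfl⟩ := hz
  rfl

theorem maps_left_unique {t : PHomeo X} {x y z : X} (hx : t.maps x z) (hy : t.maps y z) :
    x = y := by
  obtain ⟨hx, hxz⟩ := hx
  obtain ⟨hy, hyz⟩ := hy
  exact congrArg Subtype.val (t.toHomeomorph.injective (Subtype.ext (hxz.trans hyz.symm)))

theorem mem_src_iff_s16 {t : PHomeo X} {x : X} : x ∈ t.src ↔ ∃ y, t.maps x y :=
  ⟨fun h => ⟨_, h, rfl⟩, fun ⟨_, h, _⟩ => h⟩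

theorem mem_tgt_iff_s16 {t : PHomeo X} {y : X} : y ∈ t.tgt ↔ ∃ x, t.maps x y :=
  ⟨fun h => ⟨_, (t.toHomeomorph.symm ⟨y, h⟩).2,
      congrArg Subtype.val (t.toHomeomorph.apply_symm_apply ⟨y, h⟩)⟩,
    fun ⟨x, hx, hxy⟩ => hxy ▸ (t.toHomeomorph ⟨x, hx⟩).2⟩

theorem ext_maps {s t : PHomeo X} (h : ∀ x y, s.maps x y ↔ t.maps x y) : s = t := by
  have hsrc : s.src = t.src := Set.ext fun x => by
    simpa only [mem_src_iff_s16] using exists_congr (h x)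
  have htgt : s.tgt = t.tgt := Set.ext fun y => by
    simpa only [mem_tgt_iff_s16] using exists_congr fun x => h x y
  obtain ⟨U, V, _, _, f⟩ := s
  obtain ⟨U', V', _, _, g⟩ := t
  obtain rfl : U = U' := hsrc
  obtain rfl : V = V' := htgt
  obtain rfl : f = g := Homeomorph.ext fun x => by
    obtain ⟨_, hg⟩ := (h x (f x)).1 ⟨x.2, rfl⟩
    exact Subtype.ext hg.symm
  rfl

def srcOpens (t : PHomeo X) : Opens X := ⟨t.src, t.src_open⟩

def ofOpens (U : Opens X) : PHomeo X := ⟨U, U, U.isOpen, U.isOpen, Homeomorph.refl U⟩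

theorem maps_ofOpens {U : Opens X} {x y : X} : (ofOpens U).maps x y ↔ x ∈ U ∧ x = y :=
  ⟨fun ⟨hx, hxy⟩ => ⟨hx, hxy⟩, fun ⟨hx, hxy⟩ => ⟨hx, hxy⟩⟩

theorem ofOpens_injective : Injective (ofOpens (X := X)) := fun _ _ h =>
  SetLike.coe_injective (congrArg src h)

end PHomeo

namespace IsPHMul

open PHomeo

variable {X : Type*} [TopologicalSpace X] {mul : PHomeo X → PHomeo X → PHomeo X}

theorem mul_ofOpens (hmul : IsPHMul mul) (U V : Opens X) :
    mul (ofOpens U) (ofOpens V) = ofOpens (U ⊓ V) :=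
  ext_maps fun x z => by
    simp only [hmul _ _ x z, maps_ofOpens, Opens.mem_inf]
    constructor
    · rintro ⟨_, ⟨hV, rfl⟩, hU, rfl⟩
      exact ⟨⟨hU, hV⟩, rfl⟩
    · rintro ⟨⟨hU, hV⟩, rfl⟩
      exact ⟨x, ⟨hV, rfl⟩, hU, rfl⟩

theorem mul_self_eq_self_iff (hmul : IsPHMul mul) {e : PHomeo X} :
    mul e e = e ↔ ofOpens e.srcOpens = e := by
  refine ⟨fun h => ?_, fun h => by rw [← h, hmul.mul_ofOpens, inf_idem]⟩
  have fixes : ∀ {x y}, e.maps x y → x = y := fun hxy => by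
    obtain ⟨z, hxz, hzy⟩ := (hmul e e _ _).1 (h.symm ▸ hxy)
    obtain rfl := maps_right_unique hxz hxy
    exact maps_left_unique hxy hzy
  refine ext_maps fun x y => ⟨?_, fun hxy => ⟨hxy.1, fixes hxy⟩⟩
  rintro ⟨hx, rfl⟩
  exact ⟨hx, (fixes ⟨hx, rfl⟩).symm⟩

theorem mul_ofOpens_eq_left_iff (hmul : IsPHMul mul) {U V : Opens X} :
    mul (ofOpens U) (ofOpens V) = ofOpens U ↔ U ≤ V := by
  rw [hmul.mul_ofOpens, ofOpens_injective.eq_iff, inf_eq_left]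

end IsPHMul

namespace PHomeo

variable {X Y : Type*} [TopologicalSpace X] [TopologicalSpace Y]
  {mulX : PHomeo X → PHomeo X → PHomeo X} {mulY : PHomeo Y → PHomeo Y → PHomeo Y}
  {i : PHomeo X → PHomeo Y}

def opensMap (i : PHomeo X → PHomeo Y) (U : Opens X) : Opens Y := (i (ofOpens U)).srcOpens

theorem ofOpens_opensMap (hX : IsPHMul mulX) (hY : IsPHMul mulY)
    (hmul : ∀ a b, i (mulX a b) = mulY (i a) (i b)) (U : Opens X) :
    ofOpens (opensMap i U) = i (ofOpens U) :=
  hY.mul_self_eq_self_iff.1 (by rw [← hmul, hX.mul_ofOpens, inf_idem])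

theorem opensMap_le_opensMap_iff (hX : IsPHMul mulX) (hY : IsPHMul mulY) (hi : Injective i)
    (hmul : ∀ a b, i (mulX a b) = mulY (i a) (i b)) {U V : Opens X} :
    opensMap i U ≤ opensMap i V ↔ U ≤ V := by
  rw [← hY.mul_ofOpens_eq_left_iff, ofOpens_opensMap hX hY hmul, ofOpens_opensMap hX hY hmul,
    ← hmul, hi.eq_iff, hX.mul_ofOpens_eq_left_iff]

theorem opensMap_surjective (hX : IsPHMul mulX) (hY : IsPHMul mulY) (hi : Bijective i)
    (hmul : ∀ a b, i (mulX a b) = mulY (i a) (i b)) : Surjective (opensMap i) := fun W => by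
  obtain ⟨e, he⟩ := hi.2 (ofOpens W)
  have he_idem : ofOpens e.srcOpens = e :=
    hX.mul_self_eq_self_iff.1 (hi.1 (by rw [hmul, he, hY.mul_ofOpens, inf_idem]))
  refine ⟨e.srcOpens, ofOpens_injective ?_⟩
  rw [ofOpens_opensMap hX hY hmul, he_idem, he]

noncomputable def opensOrderIso (hX : IsPHMul mulX) (hY : IsPHMul mulY) (hi : Bijective i)
    (hmul : ∀ a b, i (mulX a b) = mulY (i a) (i b)) : Opens X ≃o Opens Y :=
  OrderIso.ofSurjective
    (OrderEmbedding.ofMapLEIff (opensMap i) fun _ _ => opensMap_le_opensMap_iff hX hY hi.1 hmul)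
    (opensMap_surjective hX hY hi hmul)

end PHomeo

/-- sober spaces with isomorphic inverse semigroups of partial
homeomorphisms are homeomorphic. -/
theorem homeo_of_iso_partial_homeos {X Y : Type*} [TopologicalSpace X] [TopologicalSpace Y]
    [QuasiSober X] [T0Space X] [QuasiSober Y] [T0Space Y]
    (mulX : PHomeo X → PHomeo X → PHomeo X) (hX : IsPHMul mulX)
    (mulY : PHomeo Y → PHomeo Y → PHomeo Y) (hY : IsPHMul mulY)
    (h : ∃ i : PHomeo X → PHomeo Y,
      Function.Bijective i ∧ ∀ a b, i (mulX a b) = mulY (i a) (i b)) :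
    Nonempty (X ≃ₜ Y) := by
  obtain ⟨i, hi, hmul⟩ := h
  exact ⟨.ofOpensOrderIso (PHomeo.opensOrderIso hX hY hi hmul)⟩
end
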